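/- arXiv:2302.02247 — 5 statements merged into one kernel-verified Lean document; each statement's English description precedes it below -/
import Mathlib

section
/- Let d, n ≥ 1 be integers and let a : ℤ^d → ℝ satisfy a_j = a_{−j} for all j and Σ_{j∈ℤ^d} |a_j| < ∞, and define α(λ) := (2π)^{−d} Σ_{j∈ℤ^d} a_j e^{i j·λ} for λ ∈ [−π,π]^d. Suppose there exists m > 0 with α(λ) ≥ m for all λ ∈ [−π,π]^d. Let A_n be the n^d × n^d real matrix indexed by multi-indices j, k ∈ {0,…,n−1}^d with (j,k) entry a_{j−k}. Then A_n is positive definite (hence invertible), and ‖A_n^{−1}‖_op ≤ (2π)^{−d} · sup_{λ∈[−π,π]^d} (1/α(λ)). -/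
/-- The spectral symbol `α(λ) = (2π)^{-d} ∑_{j ∈ ℤ^d} a_j e^{i j·λ}` of the
coefficient sequence `a : ℤ^d → ℝ`.  (By the symmetry `a_j = a_{-j}` it is real,
which we express below through its real part.) -/
noncomputable def specSymbol (d : ℕ) (a : (Fin d → ℤ) → ℝ) (l : Fin d → ℝ) : ℂ :=
  (((2 * Real.pi) ^ d : ℝ) : ℂ)⁻¹ *
    ∑' j : Fin d → ℤ, (a j : ℂ) * Complex.exp (Complex.I * ∑ i, (j i : ℝ) * l i)

/-- The `n^d × n^d` multilevel Toeplitz matrix with `(j,k)`-entry `a_{j-k}`,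
indexed by multi-indices `j, k ∈ {0,…,n-1}^d`. -/
noncomputable def toeplitzMatrix (d n : ℕ) (a : (Fin d → ℤ) → ℝ) :
    Matrix (Fin d → Fin n) (Fin d → Fin n) ℝ :=
  Matrix.of fun j k => a fun i => (j i : ℤ) - (k i : ℤ)

open MeasureTheory Complex
open scoped Matrix

noncomputable def eChar (d : ℕ) (v : Fin d → ℤ) (l : Fin d → ℝ) : ℂ :=
  Complex.exp (Complex.I * ((∑ i, (v i : ℝ) * l i : ℝ) : ℂ))

lemma oneD (k : ℤ) : ∫ t in Set.Icc (-Real.pi) Real.pi, Complex.exp (Complex.I * (k : ℝ) * t) =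
    if k = 0 then ((2 * Real.pi : ℝ) : ℂ) else 0 := by
  have hle : -Real.pi ≤ Real.pi := by linarith [Real.pi_pos]
  rw [MeasureTheory.integral_Icc_eq_integral_Ioc, ← intervalIntegral.integral_of_le hle]
  by_cases hk : k = 0
  · simp only [hk, Int.cast_zero, Complex.ofReal_zero, mul_zero, zero_mul, Complex.exp_zero,
      intervalIntegral.integral_const, if_pos rfl, Complex.real_smul, mul_one]
    push_cast; ring
  · have hc : (Complex.I * (k : ℝ) : ℂ) ≠ 0 := by
      simp [Complex.I_ne_zero, Complex.ext_iff, hk]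
    rw [if_neg hk]
    open intervalIntegral in
    have h := integral_exp_mul_complex (a := -Real.pi) (b := Real.pi) hc
    rw [show (fun x : ℝ => Complex.exp (Complex.I * (k:ℝ) * x)) =
        (fun x : ℝ => Complex.exp ((Complex.I * (k:ℝ)) * x)) from rfl, h]
    have e1 : Complex.I * (k:ℝ) * (Real.pi : ℂ) = k * (Real.pi * Complex.I) := by push_cast; ring
    have e2 : Complex.I * (k:ℝ) * ((-Real.pi : ℝ) : ℂ) = ((-k : ℤ) : ℂ) * (Real.pi * Complex.I) := by
      push_cast; ring
    rw [e1, e2, Complex.exp_int_mul, Complex.exp_int_mul, Complex.exp_pi_mul_I]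
    have hsq : ((-1 : ℂ) ^ k) * ((-1 : ℂ) ^ k) = 1 := by
      rw [← zpow_add₀ (by norm_num : (-1:ℂ) ≠ 0)]
      rw [show k + k = 2 * k by ring, zpow_mul]
      norm_num
    rw [zpow_neg, inv_eq_of_mul_eq_one_right hsq]
    simp

lemma indicator_pi_prod {d : ℕ} (s : Set ℝ) (f : Fin d → ℝ → ℂ) (x : Fin d → ℝ) :
    Set.indicator (Set.pi Set.univ (fun _ : Fin d => s)) (fun y => ∏ i, f i (y i)) x =
      ∏ i, Set.indicator s (f i) (x i) := by
  by_cases h : x ∈ Set.pi Set.univ (fun _ : Fin d => s)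
  · rw [Set.indicator_of_mem h]
    exact Finset.prod_congr rfl fun i _ =>
      (Set.indicator_of_mem (h i (Set.mem_univ i)) _).symm
  · rw [Set.indicator_of_notMem h]
    rw [Set.mem_pi] at h
    push_neg at h
    obtain ⟨i, _, hi⟩ := h
    exact (Finset.prod_eq_zero (Finset.mem_univ i)
      (by rw [Set.indicator_of_notMem hi])).symm

lemma orth' (d : ℕ) (r : Fin d → ℤ) :
    ∫ l in Set.Icc (fun _ => -Real.pi) (fun _ : Fin d => Real.pi),
      Complex.exp (Complex.I * ((∑ i, (r i : ℝ) * l i : ℝ) : ℂ)) =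
    if r = 0 then (((2 * Real.pi) ^ d : ℝ) : ℂ) else 0 := by
  have hintg : ∀ x : Fin d → ℝ, Complex.exp (Complex.I * ((∑ i, (r i : ℝ) * x i : ℝ) : ℂ)) =
      ∏ i, Complex.exp (Complex.I * ((r i : ℝ) : ℂ) * ((x i : ℝ) : ℂ)) := by
    intro x
    rw [← Complex.exp_sum]
    congr 1
    push_cast
    rw [Finset.mul_sum]
    exact Finset.sum_congr rfl fun i _ => by ring
  simp_rw [hintg]
  rw [← Set.pi_univ_Icc,
    ← MeasureTheory.integral_indicator (MeasurableSet.univ_pi (fun _ => measurableSet_Icc))]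
  simp_rw [indicator_pi_prod (Set.Icc (-Real.pi) Real.pi)
    (fun i t => Complex.exp (Complex.I * ((r i : ℝ) : ℂ) * (t : ℂ)))]
  rw [MeasureTheory.volume_pi, MeasureTheory.integral_fintype_prod_eq_prod
    (fun i t => Set.indicator (Set.Icc (-Real.pi) Real.pi)
      (fun u : ℝ => Complex.exp (Complex.I * ((r i : ℝ) : ℂ) * (u : ℂ))) t)]
  have : ∀ i, (∫ t : ℝ, Set.indicator (Set.Icc (-Real.pi) Real.pi)
      (fun u : ℝ => Complex.exp (Complex.I * ((r i : ℝ) : ℂ) * (u : ℂ))) t) =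
      if r i = 0 then ((2 * Real.pi : ℝ) : ℂ) else 0 := by
    intro i
    rw [MeasureTheory.integral_indicator measurableSet_Icc]
    exact oneD (r i)
  simp_rw [this]
  by_cases hr : r = 0
  · simp [hr, Finset.prod_const]
  · have : ∃ i, r i ≠ 0 := by
      by_contra h
      push_neg at h
      exact hr (funext h)
    obtain ⟨i, hi⟩ := this
    rw [if_neg hr]
    exact Finset.prod_eq_zero (Finset.mem_univ i) (by rw [if_neg hi])

lemma orth (d : ℕ) (r : Fin d → ℤ) :
    ∫ l in Set.Icc (fun _ => -Real.pi) (fun _ : Fin d => Real.pi), eChar d r l =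
    if r = 0 then (((2 * Real.pi) ^ d : ℝ) : ℂ) else 0 := orth' d r

lemma norm_eChar (d : ℕ) (v : Fin d → ℤ) (l : Fin d → ℝ) : ‖eChar d v l‖ = 1 := by
  rw [eChar, Complex.norm_exp]
  simp

lemma eChar_mul (d : ℕ) (v w : Fin d → ℤ) (l : Fin d → ℝ) :
    eChar d v l * eChar d w l = eChar d (v + w) l := by
  rw [eChar, eChar, eChar, ← Complex.exp_add]
  congr 1
  push_cast
  rw [← mul_add, ← Finset.sum_add_distrib]
  congr 1
  exact Finset.sum_congr rfl fun i _ => by push_cast [Pi.add_apply]; ring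

lemma conj_eChar (d : ℕ) (v : Fin d → ℤ) (l : Fin d → ℝ) :
    (starRingEnd ℂ) (eChar d v l) = eChar d (-v) l := by
  rw [eChar, eChar, ← Complex.exp_conj]
  congr 1
  simp only [map_mul, Complex.conj_I, Complex.conj_ofReal]
  push_cast
  rw [neg_mul, Finset.mul_sum, Finset.mul_sum, ← Finset.sum_neg_distrib]
  exact Finset.sum_congr rfl fun i _ => by push_cast [Pi.neg_apply]; ring

lemma continuous_eChar (d : ℕ) (v : Fin d → ℤ) : Continuous (eChar d v) :=
  Complex.continuous_exp.comp <| continuous_const.mul <| Complex.continuous_ofReal.comp <|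
    continuous_finset_sum _ fun i _ => continuous_const.mul (continuous_apply i)

lemma volume_cube (d : ℕ) :
    (volume (Set.Icc (fun _ => -Real.pi) (fun _ : Fin d => Real.pi))).toReal
      = (2 * Real.pi) ^ d := by
  rw [← Set.pi_univ_Icc, MeasureTheory.volume_pi_pi]
  simp only [Real.volume_Icc, Finset.prod_const, Finset.card_univ, Fintype.card_fin,
    ENNReal.toReal_pow]
  rw [ENNReal.toReal_ofReal (by linarith [Real.pi_pos] : (0:ℝ) ≤ Real.pi - -Real.pi)]
  ring

lemma key_inversion (d : ℕ) (a : (Fin d → ℤ) → ℝ) (hsum : Summable fun j => |a j|)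
    (r : Fin d → ℤ) :
    ∫ l in Set.Icc (fun _ => -Real.pi) (fun _ : Fin d => Real.pi),
      (∑' j : Fin d → ℤ, (a j : ℂ) * eChar d j l) * eChar d r l
    = (((2 * Real.pi) ^ d : ℝ) : ℂ) * (a (-r) : ℂ) := by
  set Q := Set.Icc (fun _ => -Real.pi) (fun _ : Fin d => Real.pi) with hQ
  have hQc : IsCompact Q := isCompact_Icc
  have hint : ∀ j : Fin d → ℤ,
      Integrable (fun l => (a j : ℂ) * eChar d j l * eChar d r l) (volume.restrict Q) := by
    intro j
    exact ((continuous_const.mul (continuous_eChar d j)).mul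
      (continuous_eChar d r)).continuousOn.integrableOn_compact hQc
  have hnorm : ∀ j (l : Fin d → ℝ), ‖(a j : ℂ) * eChar d j l * eChar d r l‖ = |a j| := by
    intro j l
    rw [norm_mul, norm_mul, norm_eChar, norm_eChar, Complex.norm_real]
    simp [Real.norm_eq_abs]
  have hsummable : Summable fun j : Fin d → ℤ =>
      ∫ l, ‖(a j : ℂ) * eChar d j l * eChar d r l‖ ∂(volume.restrict Q) := by
    have : ∀ j : Fin d → ℤ, (∫ l, ‖(a j : ℂ) * eChar d j l * eChar d r l‖ ∂(volume.restrict Q))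
        = (2 * Real.pi) ^ d * |a j| := by
      intro j
      simp_rw [hnorm j]
      rw [MeasureTheory.integral_const, measureReal_restrict_apply_univ, measureReal_def, volume_cube, smul_eq_mul]
    exact Summable.congr (hsum.mul_left ((2 * Real.pi) ^ d)) (fun j => (this j).symm)
  have swap := MeasureTheory.integral_tsum_of_summable_integral_norm hint hsummable
  have hrw : ∀ l : Fin d → ℝ, (∑' j : Fin d → ℤ, (a j : ℂ) * eChar d j l) * eChar d r l
      = ∑' j : Fin d → ℤ, (a j : ℂ) * eChar d j l * eChar d r l := by
    intro l
    exact (tsum_mul_right).symm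
  calc ∫ l in Q, (∑' j : Fin d → ℤ, (a j : ℂ) * eChar d j l) * eChar d r l
      = ∫ l in Q, ∑' j : Fin d → ℤ, (a j : ℂ) * eChar d j l * eChar d r l := by
        simp_rw [hrw]
    _ = ∑' j : Fin d → ℤ, ∫ l in Q, (a j : ℂ) * eChar d j l * eChar d r l := swap.symm
    _ = ∑' j : Fin d → ℤ, (a j : ℂ) * (if j + r = 0 then (((2 * Real.pi) ^ d : ℝ) : ℂ) else 0) := by
        refine tsum_congr fun j => ?_
        simp_rw [mul_assoc, eChar_mul]
        rw [MeasureTheory.integral_const_mul, orth d (j + r)]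
    _ = (((2 * Real.pi) ^ d : ℝ) : ℂ) * (a (-r) : ℂ) := by
        have hz : ∀ b : Fin d → ℤ, b ≠ -r →
            (a b : ℂ) * (if b + r = 0 then (((2 * Real.pi) ^ d : ℝ) : ℂ) else 0) = 0 := by
          intro b hb
          rw [if_neg, mul_zero]
          intro h
          apply hb
          funext i
          have := congrFun h i
          simp only [Pi.add_apply, Pi.zero_apply, Pi.neg_apply] at this ⊢
          omega
        rw [tsum_eq_single (-r) hz, if_pos (by funext i; simp), mul_comm]

section quad
variable (d n : ℕ) (a : (Fin d → ℤ) → ℝ)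

lemma continuous_S (hsum : Summable fun j => |a j|) :
    Continuous (fun l => ∑' j : Fin d → ℤ, (a j : ℂ) * eChar d j l) := by
  apply continuous_tsum (fun j => continuous_const.mul (continuous_eChar d j)) hsum
  intro j l
  rw [Pi.mul_apply, norm_mul, norm_eChar, mul_one, Complex.norm_real, Real.norm_eq_abs]

lemma quad (hsymm : ∀ j, a j = a (-j)) (hsum : Summable fun j => |a j|)
    (c : ℝ)
    (hc : ∀ l ∈ Set.Icc (fun _ => -Real.pi) (fun _ : Fin d => Real.pi),
      c ≤ (specSymbol d a l).re)
    (x : (Fin d → Fin n) → ℝ) :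
    ((2 * Real.pi) ^ d * c) * ∑ j, x j ^ 2 ≤
      ∑ j, ∑ k, x j * x k * a (fun i => (j i : ℤ) - (k i : ℤ)) := by
  classical
  set Q := Set.Icc (fun _ => -Real.pi) (fun _ : Fin d => Real.pi) with hQdef
  have hQc : IsCompact Q := isCompact_Icc
  set S : (Fin d → ℝ) → ℂ := fun l => ∑' j : Fin d → ℤ, (a j : ℂ) * eChar d j l with hSdef
  have hScont : Continuous S := continuous_S d a hsum
  set ev : (Fin d → Fin n) → (Fin d → ℤ) := fun j i => (j i : ℤ) with hev
  set P : (Fin d → ℝ) → ℂ := fun l => ∑ j : Fin d → Fin n, (x j : ℂ) * eChar d (ev j) l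
    with hPdef
  have hPcont : Continuous P :=
    continuous_finset_sum _ fun j _ => continuous_const.mul (continuous_eChar d (ev j))
  have htwopi : (0:ℝ) < (2 * Real.pi) ^ d := by positivity
  -- expansion of |P|²
  have hPP : ∀ l, P l * (starRingEnd ℂ) (P l) =
      ∑ j, ∑ k, ((x j : ℂ) * (x k : ℂ)) * eChar d (ev j - ev k) l := by
    intro l
    rw [hPdef]
    simp only [map_sum, map_mul, Complex.conj_ofReal, conj_eChar, Finset.sum_mul_sum]
    refine Finset.sum_congr rfl fun j _ => Finset.sum_congr rfl fun k _ => ?_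
    rw [mul_mul_mul_comm, eChar_mul, sub_eq_add_neg]
  -- pointwise real form
  have hre : ∀ l, (S l * (P l * (starRingEnd ℂ) (P l))).re
      = (S l).re * Complex.normSq (P l) := by
    intro l
    rw [Complex.mul_conj]
    simp [Complex.mul_re]
  -- integrability
  have hint1 : IntegrableOn (fun l => S l * (P l * (starRingEnd ℂ) (P l))) Q := by
    exact ((hScont.mul (hPcont.mul (Complex.continuous_conj.comp
      hPcont))).continuousOn).integrableOn_compact hQc
  have hint2 : IntegrableOn (fun l => P l * (starRingEnd ℂ) (P l)) Q := by
    exact ((hPcont.mul (Complex.continuous_conj.comp hPcont)).continuousOn).integrableOn_compact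
      hQc
  -- integrability of individual character terms
  have hintjk : ∀ (r : Fin d → ℤ) (z : ℂ),
      Integrable (fun l => z * (S l * eChar d r l)) (volume.restrict Q) :=
    fun r z => ((continuous_const.mul (hScont.mul
      (continuous_eChar d r))).continuousOn).integrableOn_compact hQc
  have hintjk' : ∀ (r : Fin d → ℤ) (z : ℂ),
      Integrable (fun l => z * eChar d r l) (volume.restrict Q) :=
    fun r z => ((continuous_const.mul (continuous_eChar d r)).continuousOn).integrableOn_compact
      hQc
  have hkey : ∀ r : Fin d → ℤ, ∫ l in Q, S l * eChar d r l
      = (((2 * Real.pi) ^ d : ℝ) : ℂ) * (a (-r) : ℂ) := fun r => key_inversion d a hsum r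
  -- value of ∫ S * |P|^2
  have hval1 : ∫ l in Q, S l * (P l * (starRingEnd ℂ) (P l)) =
      (((2 * Real.pi) ^ d : ℝ) : ℂ) *
        ∑ j, ∑ k, ((x j : ℂ) * (x k : ℂ)) * (a (ev j - ev k) : ℂ) := by
    have expand : ∀ l, S l * (P l * (starRingEnd ℂ) (P l)) =
        ∑ j, ∑ k, ((x j : ℂ) * (x k : ℂ)) * (S l * eChar d (ev j - ev k) l) := by
      intro l
      rw [hPP l, Finset.mul_sum]
      refine Finset.sum_congr rfl fun j _ => ?_
      rw [Finset.mul_sum]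
      exact Finset.sum_congr rfl fun k _ => by ring
    simp_rw [expand]
    rw [MeasureTheory.integral_finset_sum _
      (fun j _ => integrable_finset_sum _ (fun k _ => hintjk _ _))]
    have : ∀ j, (∫ l in Q, ∑ k, ((x j : ℂ) * (x k : ℂ)) * (S l * eChar d (ev j - ev k) l))
        = ∑ k, ((x j : ℂ) * (x k : ℂ))
            * ((((2 * Real.pi) ^ d : ℝ) : ℂ) * (a (ev j - ev k) : ℂ)) := by
      intro j
      rw [MeasureTheory.integral_finset_sum _ (fun k _ => hintjk _ _)]
      refine Finset.sum_congr rfl fun k _ => ?_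
      rw [MeasureTheory.integral_const_mul, hkey, ← hsymm]
    simp_rw [this, Finset.mul_sum]
    refine Finset.sum_congr rfl fun j _ => Finset.sum_congr rfl fun k _ => by ring
  -- value of ∫ |P|^2
  have hev_eq : ∀ j k : Fin d → Fin n, (ev j - ev k = 0) ↔ j = k := by
    intro j k
    constructor
    · intro h
      funext i
      have := congrFun h i
      simp only [Pi.sub_apply, Pi.zero_apply, hev] at this
      have : (j i : ℤ) = (k i : ℤ) := by omega
      exact Fin.ext (by exact_mod_cast this)
    · rintro rfl; simp
  have hval2 : ∫ l in Q, P l * (starRingEnd ℂ) (P l) =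
      (((2 * Real.pi) ^ d : ℝ) : ℂ) * ∑ j, ((x j : ℂ))^2 := by
    simp_rw [hPP]
    rw [MeasureTheory.integral_finset_sum _
      (fun j _ => integrable_finset_sum _ (fun k _ => hintjk' _ _))]
    have : ∀ j, (∫ l in Q, ∑ k, ((x j : ℂ) * (x k : ℂ)) * eChar d (ev j - ev k) l)
        = ((x j : ℂ))^2 * (((2 * Real.pi) ^ d : ℝ) : ℂ) := by
      intro j
      rw [MeasureTheory.integral_finset_sum _ (fun k _ => hintjk' _ _)]
      have term : ∀ k, ((x j : ℂ) * (x k : ℂ)) * (∫ l in Q, eChar d (ev j - ev k) l)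
          = if k = j then ((x j : ℂ))^2 * (((2 * Real.pi) ^ d : ℝ) : ℂ) else 0 := by
        intro k
        rw [orth d (ev j - ev k)]
        by_cases hk : k = j
        · subst hk
          rw [if_pos rfl, if_pos (by simp), sq]
        · rw [if_neg ((not_iff_not.2 (hev_eq j k)).2 (fun h => hk h.symm)), if_neg hk, mul_zero]
      calc (∑ k, ∫ l in Q, ((x j : ℂ) * (x k : ℂ)) * eChar d (ev j - ev k) l)
          = ∑ k, ((x j : ℂ) * (x k : ℂ)) * (∫ l in Q, eChar d (ev j - ev k) l) := by
            exact Finset.sum_congr rfl fun k _ => MeasureTheory.integral_const_mul _ _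
        _ = ∑ k, if k = j then ((x j : ℂ))^2 * (((2 * Real.pi) ^ d : ℝ) : ℂ) else 0 := by
            exact Finset.sum_congr rfl fun k _ => term k
        _ = ((x j : ℂ))^2 * (((2 * Real.pi) ^ d : ℝ) : ℂ) := by
            rw [Finset.sum_ite_eq' Finset.univ j]
            simp
    simp_rw [this]
    rw [← Finset.sum_mul, mul_comm]
  -- real parts
  have hre2 : ∫ l in Q, Complex.normSq (P l) = (2 * Real.pi) ^ d * ∑ j, (x j)^2 := by
    have : ∀ l, Complex.normSq (P l) = RCLike.re (P l * (starRingEnd ℂ) (P l)) := by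
      intro l
      rw [Complex.mul_conj]
      simp [RCLike.re_eq_complex_re]
    simp_rw [this]
    rw [integral_re hint2, hval2, RCLike.re_eq_complex_re]
    have : (((2 * Real.pi) ^ d : ℝ) : ℂ) * ∑ j, ((x j : ℂ))^2
        = (((2 * Real.pi) ^ d * ∑ j, (x j)^2 : ℝ) : ℂ) := by push_cast; ring
    rw [this, Complex.ofReal_re]
  have hre1 : ∫ l in Q, (S l).re * Complex.normSq (P l)
      = (2 * Real.pi) ^ d * ∑ j, ∑ k, x j * x k * a (ev j - ev k) := by
    have : ∀ l, (S l).re * Complex.normSq (P l)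
        = RCLike.re (S l * (P l * (starRingEnd ℂ) (P l))) := by
      intro l
      rw [RCLike.re_eq_complex_re, hre l]
    simp_rw [this]
    rw [integral_re hint1, hval1, RCLike.re_eq_complex_re]
    have : (((2 * Real.pi) ^ d : ℝ) : ℂ) *
        ∑ j, ∑ k, ((x j : ℂ) * (x k : ℂ)) * (a (ev j - ev k) : ℂ)
        = (((2 * Real.pi) ^ d * ∑ j, ∑ k, x j * x k * a (ev j - ev k) : ℝ) : ℂ) := by
      push_cast
      ring
    rw [this, Complex.ofReal_re]
  -- pointwise lower bound for S.re
  have hSre : ∀ l, (S l).re = (2 * Real.pi) ^ d * (specSymbol d a l).re := by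
    intro l
    have : specSymbol d a l = (((2 * Real.pi) ^ d : ℝ) : ℂ)⁻¹ * S l := rfl
    rw [this, ← Complex.ofReal_inv, Complex.re_ofReal_mul]
    field_simp
  -- integral comparison
  have hmono : ∫ l in Q, ((2 * Real.pi) ^ d * c) * Complex.normSq (P l)
      ≤ ∫ l in Q, (S l).re * Complex.normSq (P l) := by
    refine MeasureTheory.setIntegral_mono_on ?_ ?_ measurableSet_Icc ?_
    · exact ((continuous_const.mul (Complex.continuous_normSq.comp
        hPcont)).continuousOn).integrableOn_compact hQc
    · exact (((Complex.continuous_re.comp hScont).mul (Complex.continuous_normSq.comp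
        hPcont)).continuousOn).integrableOn_compact hQc
    · intro l hl
      have h1 : (2 * Real.pi) ^ d * c ≤ (S l).re := by
        rw [hSre l]
        exact mul_le_mul_of_nonneg_left (hc l hl) (le_of_lt htwopi)
      exact mul_le_mul_of_nonneg_right h1 (Complex.normSq_nonneg _)
  rw [MeasureTheory.integral_const_mul, hre2, hre1] at hmono
  have := le_of_mul_le_mul_left (by linarith [hmono] :
    (2 * Real.pi) ^ d * (((2 * Real.pi) ^ d * c) * ∑ j, (x j)^2)
      ≤ (2 * Real.pi) ^ d * ∑ j, ∑ k, x j * x k * a (ev j - ev k)) htwopi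
  calc ((2 * Real.pi) ^ d * c) * ∑ j, x j ^ 2
      ≤ ∑ j, ∑ k, x j * x k * a (ev j - ev k) := this
    _ = ∑ j, ∑ k, x j * x k * a (fun i => (j i : ℤ) - (k i : ℤ)) := rfl
end quad


/-- Part (ii) of the d-dimensional Samarov lemma: if the symbol `α` is bounded below by
`m > 0` on `[-π,π]^d`, then `A_n` is positive definite and the Euclidean operator norm of
`A_n⁻¹` is at most `(2π)^{-d} sup_{λ ∈ [-π,π]^d} (1/α(λ))`. -/
theorem stmt1 (d n : ℕ) (hd : 1 ≤ d) (hn : 1 ≤ n) (a : (Fin d → ℤ) → ℝ)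
    (hsymm : ∀ j, a j = a (-j)) (hsum : Summable fun j => |a j|)
    (m : ℝ) (hm : 0 < m)
    (hlow : ∀ l ∈ Set.Icc (fun _ => -Real.pi) (fun _ : Fin d => Real.pi),
      m ≤ (specSymbol d a l).re) :
    (toeplitzMatrix d n a).PosDef ∧
      ‖Matrix.toEuclideanCLM (𝕜 := ℝ) (toeplitzMatrix d n a)⁻¹‖ ≤
        ((2 * Real.pi) ^ d)⁻¹ *
          sSup ((fun l => ((specSymbol d a l).re)⁻¹) ''
            Set.Icc (fun _ => -Real.pi) (fun _ => Real.pi)) := by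
  classical
  set Q := Set.Icc (fun _ => -Real.pi) (fun _ : Fin d => Real.pi) with hQdef
  have hQc : IsCompact Q := isCompact_Icc
  have hQne : Q.Nonempty := Set.nonempty_Icc.2 (fun i => by linarith [Real.pi_pos])
  set g : (Fin d → ℝ) → ℝ := fun l => (specSymbol d a l).re with hgdef
  have hgcont : Continuous g := by
    have : Continuous (fun l => specSymbol d a l) :=
      continuous_const.mul (continuous_S d a hsum)
    exact Complex.continuous_re.comp this
  obtain ⟨l₀, hl₀, hmin⟩ := hQc.exists_isMinOn hQne hgcont.continuousOn
  set m' : ℝ := g l₀ with hm'def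
  have hm'pos : 0 < m' := lt_of_lt_of_le hm (hlow l₀ hl₀)
  have hm'min : ∀ l ∈ Q, m' ≤ g l := fun l hl => hmin hl
  have htwopi : (0:ℝ) < (2 * Real.pi) ^ d := by positivity
  set cq : ℝ := (2 * Real.pi) ^ d * m' with hcq
  have hcqpos : 0 < cq := mul_pos htwopi hm'pos
  have hquad := quad d n a hsymm hsum m' hm'min
  set A := toeplitzMatrix d n a with hA
  -- quadratic form identity
  have hdot : ∀ x : (Fin d → Fin n) → ℝ,
      x ⬝ᵥ (A *ᵥ x) = ∑ j, ∑ k, x j * x k * a (fun i => (j i : ℤ) - (k i : ℤ)) := by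
    intro x
    simp only [dotProduct, Matrix.mulVec, toeplitzMatrix, Matrix.of_apply, hA,
      Finset.mul_sum]
    exact Finset.sum_congr rfl fun j _ => Finset.sum_congr rfl fun k _ => by
      ring
  have hquad' : ∀ x : (Fin d → Fin n) → ℝ, cq * ∑ j, x j ^ 2 ≤ x ⬝ᵥ (A *ᵥ x) := by
    intro x
    rw [hdot x]
    exact hquad x
  -- positive definiteness
  have hherm : A.IsHermitian := by
    apply Matrix.IsHermitian.ext
    intro j k
    simp only [hA, toeplitzMatrix, Matrix.of_apply, RCLike.star_def, starRingEnd_apply,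
      star_trivial]
    rw [hsymm]
    congr 1
    funext i
    simp
  have hpos : ∀ x : (Fin d → Fin n) → ℝ, x ≠ 0 → 0 < x ⬝ᵥ (A *ᵥ x) := by
    intro x hx
    have hsumpos : 0 < ∑ j, x j ^ 2 := by
      obtain ⟨j, hj⟩ := Function.ne_iff.1 hx
      exact Finset.sum_pos' (fun k _ => sq_nonneg _)
        ⟨j, Finset.mem_univ j, lt_of_le_of_ne (sq_nonneg _) (Ne.symm (pow_ne_zero 2 hj))⟩
    calc (0:ℝ) < cq * ∑ j, x j ^ 2 := by positivity
      _ ≤ x ⬝ᵥ (A *ᵥ x) := hquad' x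
  have hpd : A.PosDef := Matrix.PosDef.of_dotProduct_mulVec_pos hherm (fun x hx => by simpa using hpos x hx)
  refine ⟨hpd, ?_⟩
  -- invertibility
  have hdet : IsUnit A.det := (ne_of_gt hpd.det_pos).isUnit
  have hAAinv : A * A⁻¹ = 1 := Matrix.mul_nonsing_inv A hdet
  -- norm bound on inverse
  have hbound : ∀ y : EuclideanSpace ℝ (Fin d → Fin n),
      ‖Matrix.toEuclideanCLM (𝕜 := ℝ) A⁻¹ y‖ ≤ cq⁻¹ * ‖y‖ := by
    intro y
    set v : (Fin d → Fin n) → ℝ := WithLp.equiv 2 _ y with hv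
    have hy : y = (WithLp.equiv 2 ((Fin d → Fin n) → ℝ)).symm v :=
      ((WithLp.equiv 2 _).symm_apply_apply y).symm
    set u : (Fin d → Fin n) → ℝ := A⁻¹ *ᵥ v with hu
    have happ : Matrix.toEuclideanCLM (𝕜 := ℝ) A⁻¹ y
        = (WithLp.equiv 2 ((Fin d → Fin n) → ℝ)).symm u := by
      rw [hy, WithLp.equiv_symm_apply, Matrix.toEuclideanCLM_toLp]
    have hAu : A *ᵥ u = v := by
      rw [hu, Matrix.mulVec_mulVec, hAAinv, Matrix.one_mulVec]
    set U : EuclideanSpace ℝ (Fin d → Fin n) := (WithLp.equiv 2 _).symm u with hU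
    set V : EuclideanSpace ℝ (Fin d → Fin n) := (WithLp.equiv 2 _).symm v with hV
    have hnormU : ‖U‖ ^ 2 = ∑ j, u j ^ 2 := by
      rw [EuclideanSpace.norm_eq, Real.sq_sqrt (Finset.sum_nonneg fun j _ => sq_nonneg _)]
      exact Finset.sum_congr rfl fun j _ => by rw [Real.norm_eq_abs, _root_.sq_abs]; rfl
    have hinner : u ⬝ᵥ v = inner (𝕜 := ℝ) U V := by
      rw [PiLp.inner_apply]
      exact Finset.sum_congr rfl fun j _ => by
        simp [hU, hV, RCLike.inner_apply, dotProduct, mul_comm]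
    have hCS : u ⬝ᵥ v ≤ ‖U‖ * ‖V‖ := hinner ▸ real_inner_le_norm U V
    have hchain : cq * ‖U‖ ^ 2 ≤ ‖U‖ * ‖V‖ := by
      rw [hnormU]
      calc cq * ∑ j, u j ^ 2 ≤ u ⬝ᵥ (A *ᵥ u) := hquad' u
        _ = u ⬝ᵥ v := by rw [hAu]
        _ ≤ ‖U‖ * ‖V‖ := hCS
    have hUV : ‖U‖ ≤ cq⁻¹ * ‖V‖ := by
      rcases eq_or_lt_of_le (norm_nonneg U) with h0 | h0
      · rw [← h0]; positivity
      · rw [← mul_le_mul_iff_right₀ hcqpos]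
        calc cq * ‖U‖ ≤ ‖V‖ := by
              have := hchain
              rw [sq] at this
              nlinarith
          _ = cq * (cq⁻¹ * ‖V‖) := by field_simp
    have hyV : ‖y‖ = ‖V‖ := by rw [hy]
    rw [happ, hyV]
    exact hUV
  have hop : ‖Matrix.toEuclideanCLM (𝕜 := ℝ) A⁻¹‖ ≤ cq⁻¹ :=
    ContinuousLinearMap.opNorm_le_bound _ (by positivity) hbound
  refine le_trans hop ?_
  -- compare with sSup
  have hbdd : BddAbove ((fun l => (g l)⁻¹) '' Q) := by
    refine ⟨m⁻¹, ?_⟩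
    rintro t ⟨l, hl, rfl⟩
    exact inv_anti₀ hm (hlow l hl)
  have hmem : m'⁻¹ ∈ (fun l => (g l)⁻¹) '' Q := ⟨l₀, hl₀, rfl⟩
  have hsup : m'⁻¹ ≤ sSup ((fun l => (g l)⁻¹) '' Q) := le_csSup hbdd hmem
  rw [hcq, mul_inv]
  exact mul_le_mul_of_nonneg_left hsup (by positivity)
end

section
/- Let n ≥ 1 and let B₀ and B₁ be symmetric positive definite n × n real matrices such that D := B₁ − B₀ is positive semidefinite. Then there exists ξ ∈ [0,1] such that (1/2)·( tr(B₁ B₀^{−1}) − n + log det B₀ − log det B₁ ) ≤ (1/2)·‖D‖_F² · ‖(B₀ + ξ D)^{−1}‖_op², where ‖·‖_F is the Frobenius norm and ‖·‖_op is the matrix operator norm induced by the Euclidean vector norm. (Note that B₀ + ξ D is positive definite for every ξ ∈ [0,1], and the left-hand side equals the Kullback–Leibler divergence KL(N(0,B₁) ‖ N(0,B₀)) between the corresponding centered Gaussian distributions.) -/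
open Matrix
open scoped Matrix.Norms.L2Operator MatrixOrder

namespace Stmt3Aux


variable {n : ℕ}

lemma fro2_mul_left (A X : Matrix (Fin n) (Fin n) ℝ) :
    ∑ i, ∑ j, ((A * X) i j) ^ 2 ≤ ‖A‖ ^ 2 * ∑ i, ∑ j, (X i j) ^ 2 := by
  rw [Finset.sum_comm, Finset.sum_comm (f := fun i j => (X i j) ^ 2), Finset.mul_sum]
  refine Finset.sum_le_sum fun j _ => ?_
  set x : EuclideanSpace ℝ (Fin n) := (EuclideanSpace.equiv (Fin n) ℝ).symm (fun k => X k j)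
  have hx := Matrix.l2_opNorm_mulVec A x
  have h1 : ‖(EuclideanSpace.equiv (Fin n) ℝ).symm (A *ᵥ x)‖ ^ 2
      = ∑ i, ((A * X) i j) ^ 2 := by
    rw [EuclideanSpace.norm_eq, Real.sq_sqrt (by positivity)]
    refine Finset.sum_congr rfl fun i _ => ?_
    simp [x, Matrix.mulVec, Matrix.mul_apply, dotProduct, sq_abs]
  have h2 : ‖x‖ ^ 2 = ∑ i, (X i j) ^ 2 := by
    rw [EuclideanSpace.norm_eq, Real.sq_sqrt (by positivity)]
    refine Finset.sum_congr rfl fun i _ => ?_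
    simp [x, sq_abs]
  calc ∑ i, ((A * X) i j) ^ 2 = ‖(EuclideanSpace.equiv (Fin n) ℝ).symm (A *ᵥ x)‖ ^ 2 := h1.symm
    _ ≤ (‖A‖ * ‖x‖) ^ 2 := by
        have := norm_nonneg ((EuclideanSpace.equiv (Fin n) ℝ).symm (A *ᵥ x))
        nlinarith [hx]
    _ = ‖A‖ ^ 2 * ∑ i, (X i j) ^ 2 := by rw [mul_pow, h2]

lemma fro2_mul_right (A X : Matrix (Fin n) (Fin n) ℝ) :
    ∑ i, ∑ j, ((X * A) i j) ^ 2 ≤ ‖A‖ ^ 2 * ∑ i, ∑ j, (X i j) ^ 2 := by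
  have hT : ∀ M : Matrix (Fin n) (Fin n) ℝ, ∑ i, ∑ j, (Mᵀ i j) ^ 2 = ∑ i, ∑ j, (M i j) ^ 2 := by
    intro M; rw [Finset.sum_comm]; rfl
  have h := fro2_mul_left Aᵀ Xᵀ
  have hAT : ‖Aᵀ‖ = ‖A‖ := by
    have : Aᴴ = Aᵀ := Matrix.conjTranspose_eq_transpose_of_trivial A
    rw [← this, Matrix.l2_opNorm_conjTranspose]
  rw [← Matrix.transpose_mul, hT, hT, hAT] at h
  exact h



variable {n : ℕ}

section spectral

variable {S : Matrix (Fin n) (Fin n) ℝ} (hS : S.IsHermitian)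

lemma trace_eq_sum_eig : S.trace = ∑ i, hS.eigenvalues i := by
  have hU : (star (hS.eigenvectorUnitary : Matrix (Fin n) (Fin n) ℝ)) *
      (hS.eigenvectorUnitary : Matrix (Fin n) (Fin n) ℝ) = 1 :=
    Unitary.coe_star_mul_self hS.eigenvectorUnitary
  conv_lhs => rw [hS.spectral_theorem, Unitary.conjStarAlgAut_apply]
  rw [trace_mul_cycle, hU, one_mul, trace_diagonal]
  simp

lemma trace_sq_eq_sum_eig_sq : (S * S).trace = ∑ i, (hS.eigenvalues i) ^ 2 := by
  have hU : (star (hS.eigenvectorUnitary : Matrix (Fin n) (Fin n) ℝ)) *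
      (hS.eigenvectorUnitary : Matrix (Fin n) (Fin n) ℝ) = 1 :=
    Unitary.coe_star_mul_self hS.eigenvectorUnitary
  have : S * S = (hS.eigenvectorUnitary : Matrix (Fin n) (Fin n) ℝ) *
      (diagonal (RCLike.ofReal ∘ hS.eigenvalues) * diagonal (RCLike.ofReal ∘ hS.eigenvalues)) *
      (star (hS.eigenvectorUnitary : Matrix (Fin n) (Fin n) ℝ)) := by
    conv_lhs => rw [hS.spectral_theorem, Unitary.conjStarAlgAut_apply]
    simp only [Matrix.mul_assoc]
    congr 2
    simp only [← Matrix.mul_assoc, hU, one_mul]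
  rw [this, trace_mul_cycle, ← Matrix.mul_assoc, hU, one_mul, diagonal_mul_diagonal,
    trace_diagonal]
  simp [sq]

lemma det_one_add_eq_prod (hSpsd : S.PosSemidef) :
    (1 + S).det = ∏ i, (1 + hS.eigenvalues i) := by
  have hU : (star (hS.eigenvectorUnitary : Matrix (Fin n) (Fin n) ℝ)) *
      (hS.eigenvectorUnitary : Matrix (Fin n) (Fin n) ℝ) = 1 :=
    Unitary.coe_star_mul_self hS.eigenvectorUnitary
  have hU2 : (hS.eigenvectorUnitary : Matrix (Fin n) (Fin n) ℝ) *
      (star (hS.eigenvectorUnitary : Matrix (Fin n) (Fin n) ℝ)) = 1 :=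
    Unitary.coe_mul_star_self hS.eigenvectorUnitary
  have key : (1 : Matrix (Fin n) (Fin n) ℝ) + S =
      (hS.eigenvectorUnitary : Matrix (Fin n) (Fin n) ℝ) *
      (1 + diagonal (RCLike.ofReal ∘ hS.eigenvalues)) *
      (star (hS.eigenvectorUnitary : Matrix (Fin n) (Fin n) ℝ)) := by
    rw [Matrix.mul_add, Matrix.add_mul, Matrix.mul_one, hU2]
    congr 1
    exact hS.spectral_theorem
  rw [key, det_mul, det_mul, mul_comm, ← mul_assoc, ← det_mul, hU, det_one, one_mul]
  have : (1 : Matrix (Fin n) (Fin n) ℝ) + diagonal (RCLike.ofReal ∘ hS.eigenvalues) =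
      diagonal (fun i => 1 + hS.eigenvalues i) := by
    rw [← diagonal_one, diagonal_add]
    simp [Function.comp]
  rw [this, det_diagonal]

end spectral



lemma key {n : ℕ} (B₀ B₁ : Matrix (Fin n) (Fin n) ℝ) (h₀ : B₀.PosDef)
    (h₁ : B₁.PosDef) (hD : (B₁ - B₀).PosSemidef) :
    (B₁ * B₀⁻¹).trace - n + Real.log B₀.det - Real.log B₁.det ≤
      (∑ i, ∑ j, ((B₁ - B₀) i j) ^ 2) * ‖B₀⁻¹‖ ^ 2 := by
  classical
  set D : Matrix (Fin n) (Fin n) ℝ := B₁ - B₀ with hDdef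
  set Q : Matrix (Fin n) (Fin n) ℝ := CFC.sqrt B₀ with hQdef
  have hQQ : Q * Q = B₀ := CFC.sqrt_mul_sqrt_self B₀ (Matrix.nonneg_iff_posSemidef.mpr h₀.posSemidef)
  have hQH : Q.IsHermitian := (Matrix.nonneg_iff_posSemidef.mp (CFC.sqrt_nonneg B₀)).1
  have hdetQ : Q.det * Q.det = B₀.det := by rw [← det_mul, hQQ]
  have hQu : IsUnit Q.det := by
    have h := h₀.det_pos
    refine isUnit_iff_ne_zero.mpr fun h0 => ?_
    rw [h0, mul_zero] at hdetQ; exact (lt_irrefl _ (hdetQ ▸ h))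
  set R : Matrix (Fin n) (Fin n) ℝ := Q⁻¹ with hRdef
  have hRQ : R * Q = 1 := nonsing_inv_mul Q hQu
  have hQR : Q * R = 1 := mul_nonsing_inv Q hQu
  have hRH : R.IsHermitian := hQH.inv
  have hRR : R * R = B₀⁻¹ := by rw [hRdef, ← Matrix.mul_inv_rev, hQQ]
  set S : Matrix (Fin n) (Fin n) ℝ := R * D * R with hSdef
  have hS : S.PosSemidef := by
    have h := hD.mul_mul_conjTranspose_same R
    rwa [hRH.eq] at h
  have hRB₁R : R * B₁ * R = 1 + S := by
    have : B₁ = B₀ + D := by rw [hDdef]; abel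
    rw [this, Matrix.mul_add, Matrix.add_mul, ← hQQ]
    rw [show R * (Q * Q) * R = (R * Q) * (Q * R) by noncomm_ring, hRQ, hQR, one_mul]
  -- trace identity
  have htr : (B₁ * B₀⁻¹).trace = n + S.trace := by
    rw [← hRR, ← Matrix.mul_assoc, trace_mul_cycle, hRB₁R, trace_add, trace_one]
    simp
  -- det identity
  have hdet : B₁.det * B₀⁻¹.det = (1 + S).det := by
    rw [← hRB₁R, det_mul, det_mul, ← hRR, det_mul]
    ring
  -- eigenvalues
  set μ : Fin n → ℝ := hS.1.eigenvalues with hμdef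
  have hμ0 : ∀ i, 0 ≤ μ i := fun i => hS.eigenvalues_nonneg i
  have hpos : ∀ i, (0:ℝ) < 1 + μ i := fun i => by nlinarith [hμ0 i]
  have ht1 : S.trace = ∑ i, μ i := trace_eq_sum_eig hS.1
  have ht2 : (S * S).trace = ∑ i, μ i ^ 2 := trace_sq_eq_sum_eig_sq hS.1
  have ht3 : (1 + S).det = ∏ i, (1 + μ i) := det_one_add_eq_prod hS.1 hS
  have hd0 : (0:ℝ) < B₀.det := h₀.det_pos
  have hd1 : (0:ℝ) < B₁.det := h₁.det_pos
  have hdetinv : B₀⁻¹.det = B₀.det⁻¹ := by rw [det_nonsing_inv, Ring.inverse_eq_inv]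
  have hlog : Real.log B₀.det - Real.log B₁.det = - ∑ i, Real.log (1 + μ i) := by
    have h1 : Real.log ((1 + S).det) = ∑ i, Real.log (1 + μ i) := by
      rw [ht3, Real.log_prod (fun i _ => (hpos i).ne')]
    have h2 : (1 + S).det = B₁.det * B₀.det⁻¹ := by rw [← hdet, hdetinv]
    rw [h2, Real.log_mul hd1.ne' (inv_ne_zero hd0.ne'), Real.log_inv] at h1
    linarith
  have e1 : (B₁ * B₀⁻¹).trace - n + Real.log B₀.det - Real.log B₁.det
      = ∑ i, (μ i - Real.log (1 + μ i)) := by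
    rw [htr, ht1, Finset.sum_sub_distrib]
    have := hlog
    ring_nf
    ring_nf at this
    linarith
  have e2 : ∑ i, (μ i - Real.log (1 + μ i)) ≤ ∑ i, μ i ^ 2 := by
    refine Finset.sum_le_sum fun i _ => ?_
    have hlb := Real.one_sub_inv_le_log_of_pos (hpos i)
    have hmul : (1 + μ i) * (1 + μ i)⁻¹ = 1 := mul_inv_cancel₀ (hpos i).ne'
    nlinarith [hμ0 i, hlb, hmul]
  -- trace of S*S equals Frobenius square of S
  have hSS : (S * S).trace = ∑ i, ∑ j, (S i j) ^ 2 := by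
    rw [Matrix.trace]
    simp only [Matrix.diag, Matrix.mul_apply]
    refine Finset.sum_congr rfl fun i _ => Finset.sum_congr rfl fun j _ => ?_
    have hsym : S j i = S i j := by
      have := congrFun (congrFun hS.1.eq i) j
      simpa [Matrix.conjTranspose_apply] using this
    rw [hsym]; ring
  -- operator norm bound
  have hnorm : ‖R‖ * ‖R‖ = ‖B₀⁻¹‖ := by
    rw [← Matrix.l2_opNorm_conjTranspose_mul_self R, hRH.eq, hRR]
  have hc1 : ∑ i, ∑ j, (S i j) ^ 2 ≤ ‖R‖ ^ 2 * ∑ i, ∑ j, ((D * R) i j) ^ 2 := by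
    have := fro2_mul_left R (D * R)
    rwa [← Matrix.mul_assoc] at this
  have hc2 : ∑ i, ∑ j, ((D * R) i j) ^ 2 ≤ ‖R‖ ^ 2 * ∑ i, ∑ j, (D i j) ^ 2 :=
    fro2_mul_right R D
  have hfin : ∑ i, ∑ j, (S i j) ^ 2 ≤ (∑ i, ∑ j, (D i j) ^ 2) * ‖B₀⁻¹‖ ^ 2 := by
    have hR2 : (0:ℝ) ≤ ‖R‖ ^ 2 := sq_nonneg _
    have : ∑ i, ∑ j, (S i j) ^ 2 ≤ ‖R‖ ^ 2 * (‖R‖ ^ 2 * ∑ i, ∑ j, (D i j) ^ 2) :=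
      le_trans hc1 (by nlinarith [hc2])
    calc ∑ i, ∑ j, (S i j) ^ 2 ≤ ‖R‖ ^ 2 * (‖R‖ ^ 2 * ∑ i, ∑ j, (D i j) ^ 2) := this
      _ = (∑ i, ∑ j, (D i j) ^ 2) * (‖R‖ * ‖R‖) ^ 2 := by ring
      _ = (∑ i, ∑ j, (D i j) ^ 2) * ‖B₀⁻¹‖ ^ 2 := by rw [hnorm]
  rw [e1]
  calc ∑ i, (μ i - Real.log (1 + μ i)) ≤ ∑ i, μ i ^ 2 := e2
    _ = (S * S).trace := ht2.symm
    _ = ∑ i, ∑ j, (S i j) ^ 2 := hSS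
    _ ≤ (∑ i, ∑ j, (D i j) ^ 2) * ‖B₀⁻¹‖ ^ 2 := hfin


end Stmt3Aux

/-- Lemma S.3.2 (Samarov): mean-value bound for the Kullback–Leibler divergence between
centered Gaussians `N(0,B₁)` and `N(0,B₀)`, expressed via the explicit Gaussian KL formula
`KL = (1/2)(tr(B₁B₀⁻¹) − n + log det B₀ − log det B₁)`. -/
theorem stmt3 (n : ℕ) (hn : 1 ≤ n) (B₀ B₁ : Matrix (Fin n) (Fin n) ℝ)
    (h₀ : B₀.PosDef) (h₁ : B₁.PosDef) (hD : (B₁ - B₀).PosSemidef) :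
    ∃ ξ ∈ Set.Icc (0 : ℝ) 1,
      (∀ ξ' ∈ Set.Icc (0 : ℝ) 1, (B₀ + ξ' • (B₁ - B₀)).PosDef) ∧
      (1 / 2) * ((B₁ * B₀⁻¹).trace - n + Real.log B₀.det - Real.log B₁.det) ≤
        (1 / 2) * (∑ i, ∑ j, ((B₁ - B₀) i j) ^ 2) *
          ‖Matrix.toEuclideanCLM (𝕜 := ℝ) (B₀ + ξ • (B₁ - B₀))⁻¹‖ ^ 2 := by
  have hPD : ∀ ξ' ∈ Set.Icc (0:ℝ) 1, (B₀ + ξ' • (B₁ - B₀)).PosDef := by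
    intro ξ' hξ'
    refine h₀.add_posSemidef (.of_dotProduct_mulVec_nonneg ?_ ?_)
    · show (ξ' • (B₁ - B₀))ᴴ = _
      rw [Matrix.conjTranspose_smul, hD.1.eq, star_trivial]
    · intro x
      rw [Matrix.smul_mulVec, dotProduct_smul]
      exact mul_nonneg hξ'.1 (hD.dotProduct_mulVec_nonneg x)
  refine ⟨0, Set.left_mem_Icc.mpr zero_le_one, hPD, ?_⟩
  have h := Stmt3Aux.key B₀ B₁ h₀ h₁ hD
  have hnorm : ‖Matrix.toEuclideanCLM (𝕜 := ℝ) (B₀ + (0:ℝ) • (B₁ - B₀))⁻¹‖ = ‖B₀⁻¹‖ := by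
    rw [zero_smul, add_zero]; rfl
  rw [hnorm, mul_assoc]
  linarith
end

section
/- Let C ≥ 0 and let g : ℝ → ℝ satisfy g(0) = 0 and be differentiable on [0,1], with |g′(s) − g′(t)| ≤ C·|s − t| for all s, t ∈ [0,1]. Then for every integer m ≥ 1: 0 ≤ ∫₀¹ g′(t)² dt − m · Σ_{i=1}^m ( g(i/m) − g((i−1)/m) )² ≤ (C/m) · ( ∫₀¹ |g′(t)| dt + sup_{t∈[0,1]} |g′(t)| ). -/
open intervalIntegral Set

lemma key_interval (C : ℝ) (hC : 0 ≤ C) (g g' : ℝ → ℝ)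
    (hderiv : ∀ t ∈ Set.Icc (0:ℝ) 1, HasDerivWithinAt g (g' t) (Set.Icc 0 1) t)
    (hcont : ContinuousOn g' (Set.Icc 0 1))
    (hlip : ∀ s ∈ Set.Icc (0:ℝ) 1, ∀ t ∈ Set.Icc (0:ℝ) 1, |g' s - g' t| ≤ C * |s - t|)
    (S : ℝ) (hle_S : ∀ t ∈ Set.Icc (0:ℝ) 1, |g' t| ≤ S)
    (m : ℕ) (hm0 : (0:ℝ) < m) (a b : ℝ) (ha : 0 ≤ a) (hab : a ≤ b) (hb : b ≤ 1)
    (hba : b - a = 1 / m) :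
    g b - g a = (∫ t in a..b, g' t) ∧
    0 ≤ (∫ t in a..b, (g' t)^2) - m * (∫ t in a..b, g' t)^2 ∧
    (∫ t in a..b, (g' t)^2) - m * (∫ t in a..b, g' t)^2 ≤
      C / m * ((∫ t in a..b, |g' t|) + S / m) := by
  have hsub : Set.Icc a b ⊆ Set.Icc (0:ℝ) 1 := Set.Icc_subset_Icc ha hb
  have huIcc : Set.uIcc a b = Set.Icc a b := Set.uIcc_of_le hab
  have hcg' : ContinuousOn g' (Set.Icc a b) := hcont.mono hsub
  have hint : IntervalIntegrable g' MeasureTheory.volume a b := by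
    apply ContinuousOn.intervalIntegrable; rw [huIcc]; exact hcg'
  -- FTC
  have hftc : g b - g a = (∫ t in a..b, g' t) := by
    symm
    apply intervalIntegral.integral_eq_sub_of_hasDeriv_right_of_le hab
    · exact fun t ht => ((hderiv t (hsub ht)).continuousWithinAt).mono hsub
    · intro x hx
      have hx01 : x ∈ Set.Ico (0:ℝ) 1 := ⟨le_trans ha hx.1.le, lt_of_lt_of_le hx.2 hb⟩
      exact (hderiv x ⟨hx01.1, hx01.2.le⟩).mono_of_mem_nhdsWithin (Icc_mem_nhdsGT_of_mem hx01)
    · exact hint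
  set A : ℝ := m * (∫ t in a..b, g' t) with hA
  have hintsq : IntervalIntegrable (fun t => (g' t - A)^2) MeasureTheory.volume a b := by
    apply ContinuousOn.intervalIntegrable; rw [huIcc]
    exact ((hcg'.sub continuousOn_const).pow 2)
  have hintg2 : IntervalIntegrable (fun t => (g' t)^2) MeasureTheory.volume a b := by
    apply ContinuousOn.intervalIntegrable; rw [huIcc]; exact hcg'.pow 2
  -- the identity
  have hid : (∫ t in a..b, (g' t - A)^2) =
      (∫ t in a..b, (g' t)^2) - m * (∫ t in a..b, g' t)^2 := by
    have hexp : ∀ t : ℝ, (g' t - A)^2 = (g' t)^2 - (2*A) * g' t + A^2 := by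
      intro t; ring
    calc (∫ t in a..b, (g' t - A)^2)
        = ∫ t in a..b, ((g' t)^2 - (2*A) * g' t + A^2) := by
          simp_rw [hexp]
      _ = (∫ t in a..b, (g' t)^2) - (∫ t in a..b, (2*A) * g' t)
            + ∫ t in a..b, (A^2 : ℝ) := by
          rw [intervalIntegral.integral_add, intervalIntegral.integral_sub]
          · exact hintg2
          · exact hint.const_mul _
          · exact (hintg2.sub (hint.const_mul _))
          · exact intervalIntegrable_const
      _ = (∫ t in a..b, (g' t)^2) - (2*A) * (∫ t in a..b, g' t) + (b - a) * A^2 := by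
          rw [intervalIntegral.integral_const_mul, intervalIntegral.integral_const,
            smul_eq_mul]
      _ = (∫ t in a..b, (g' t)^2) - m * (∫ t in a..b, g' t)^2 := by
          rw [hba, hA]; field_simp; ring
  -- pointwise bound on |g' t - A|
  have hptA : ∀ t ∈ Set.Icc a b, |g' t - A| ≤ C / m := by
    intro t ht
    have hconst : (∫ _ in a..b, g' t) = (b - a) * g' t := by
      rw [intervalIntegral.integral_const, smul_eq_mul]
    have hdiff : g' t - A = m * (∫ s in a..b, (g' t - g' s)) := by
      rw [intervalIntegral.integral_sub intervalIntegrable_const hint, hconst, hA, hba]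
      field_simp
    have hbnd : |∫ s in a..b, (g' t - g' s)| ≤ (C / m) * |b - a| := by
      rw [← Real.norm_eq_abs]
      apply intervalIntegral.norm_integral_le_of_norm_le_const
      intro s hs
      rw [Set.uIoc_of_le hab] at hs
      have hs' : s ∈ Set.Icc a b := ⟨hs.1.le, hs.2⟩
      have h1 : |g' t - g' s| ≤ C * |t - s| := hlip t (hsub ht) s (hsub hs')
      have h2 : |t - s| ≤ 1 / m := by
        rw [abs_le]
        constructor
        · nlinarith [ht.1, ht.2, hs'.1, hs'.2]
        · nlinarith [ht.1, ht.2, hs'.1, hs'.2]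
      calc ‖g' t - g' s‖ = |g' t - g' s| := rfl
        _ ≤ C * |t - s| := h1
        _ ≤ C * (1/m) := by apply mul_le_mul_of_nonneg_left h2 hC
        _ = C / m := by ring
    rw [hdiff, abs_mul, abs_of_pos hm0]
    calc (m:ℝ) * |∫ s in a..b, (g' t - g' s)| ≤ m * ((C / m) * |b - a|) := by
          exact mul_le_mul_of_nonneg_left hbnd hm0.le
      _ = C / m := by rw [hba, abs_of_pos (by positivity : (0:ℝ) < 1/m)]; field_simp
  -- |A| ≤ S
  have hAS : |A| ≤ S := by
    have : |∫ t in a..b, g' t| ≤ S * |b - a| := by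
      rw [← Real.norm_eq_abs]
      apply intervalIntegral.norm_integral_le_of_norm_le_const
      intro s hs
      rw [Set.uIoc_of_le hab] at hs
      exact hle_S s (hsub ⟨hs.1.le, hs.2⟩)
    rw [hA, abs_mul, abs_of_pos hm0]
    calc (m:ℝ) * |∫ t in a..b, g' t| ≤ m * (S * |b - a|) :=
          mul_le_mul_of_nonneg_left this hm0.le
      _ = S := by rw [hba, abs_of_pos (by positivity : (0:ℝ) < 1/m)]; field_simp
  refine ⟨hftc, ?_, ?_⟩
  · rw [← hid]
    apply intervalIntegral.integral_nonneg hab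
    intro u _; positivity
  · rw [← hid]
    have hmono : (∫ t in a..b, (g' t - A)^2) ≤ ∫ t in a..b, (C/m) * (|g' t| + S) := by
      apply intervalIntegral.integral_mono_on hab hintsq
      · apply ContinuousOn.intervalIntegrable; rw [huIcc]
        exact (continuousOn_const.mul ((hcg'.abs).add continuousOn_const))
      · intro t ht
        have h1 : |g' t - A| ≤ C / m := hptA t ht
        have h2 : |g' t - A| ≤ |g' t| + |A| := abs_sub _ _
        have h3 : (g' t - A)^2 = |g' t - A| * |g' t - A| := by
          rw [← abs_mul, abs_mul_self]; ring
        rw [h3]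
        calc |g' t - A| * |g' t - A| ≤ (C/m) * |g' t - A| :=
              mul_le_mul_of_nonneg_right h1 (abs_nonneg _)
          _ ≤ (C/m) * (|g' t| + S) := by
              apply mul_le_mul_of_nonneg_left _ (by positivity)
              exact le_trans h2 (by linarith [hAS])
    calc (∫ t in a..b, (g' t - A)^2) ≤ ∫ t in a..b, (C/m) * (|g' t| + S) := hmono
      _ = (C/m) * ((∫ t in a..b, |g' t|) + S / m) := by
          rw [intervalIntegral.integral_const_mul, intervalIntegral.integral_add,
            intervalIntegral.integral_const, smul_eq_mul, hba]
          · ring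
          · apply ContinuousOn.intervalIntegrable; rw [huIcc]; exact hcg'.abs
          · exact intervalIntegrable_const


/-- The key analytic estimate for the RKHS discretization bias in `W₁[0,1]`: if `g(0)=0`,
`g` is differentiable on `[0,1]` with derivative `g'` Lipschitz with constant `C`, then the
Riemann-type approximation `m ∑_{i=1}^m (g(i/m) − g((i−1)/m))²` of the Sobolev energy
`∫₀¹ (g')²` satisfies
`0 ≤ ∫₀¹ (g')² − m ∑ᵢ (Δᵢg)² ≤ (C/m)(∫₀¹ |g'| + sup_{[0,1]} |g'|)`. -/
theorem stmt11 (C : ℝ) (hC : 0 ≤ C) (g g' : ℝ → ℝ) (hg0 : g 0 = 0)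
    (hderiv : ∀ t ∈ Set.Icc (0 : ℝ) 1, HasDerivWithinAt g (g' t) (Set.Icc 0 1) t)
    (hlip : ∀ s ∈ Set.Icc (0 : ℝ) 1, ∀ t ∈ Set.Icc (0 : ℝ) 1, |g' s - g' t| ≤ C * |s - t|)
    (m : ℕ) (hm : 1 ≤ m) :
    0 ≤ (∫ t in (0 : ℝ)..1, (g' t) ^ 2) -
        m * ∑ i ∈ Finset.range m, (g (((i : ℝ) + 1) / m) - g ((i : ℝ) / m)) ^ 2 ∧
    (∫ t in (0 : ℝ)..1, (g' t) ^ 2) -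
        m * ∑ i ∈ Finset.range m, (g (((i : ℝ) + 1) / m) - g ((i : ℝ) / m)) ^ 2 ≤
      C / m * ((∫ t in (0 : ℝ)..1, |g' t|) +
        sSup ((fun t => |g' t|) '' Set.Icc (0 : ℝ) 1)) := by
  have hm0 : (0:ℝ) < m := by exact_mod_cast hm
  set S := sSup ((fun t => |g' t|) '' Set.Icc (0:ℝ) 1) with hSdef
  have hcont : ContinuousOn g' (Set.Icc 0 1) := by
    have : LipschitzOnWith ⟨C, hC⟩ g' (Set.Icc 0 1) := by
      apply LipschitzOnWith.of_dist_le_mul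
      intro x hx y hy
      simp only [Real.dist_eq]; exact hlip x hx y hy
    exact this.continuousOn
  have hbdd : BddAbove ((fun t => |g' t|) '' Set.Icc (0:ℝ) 1) :=
    (isCompact_Icc.image_of_continuousOn hcont.abs).bddAbove
  have hle_S : ∀ t ∈ Set.Icc (0:ℝ) 1, |g' t| ≤ S := fun t ht => le_csSup hbdd ⟨t, ht, rfl⟩
  set pts : ℕ → ℝ := fun i => (i:ℝ)/m with hpts
  have hpts0 : pts 0 = 0 := by simp [hpts]
  have hptsm : pts m = 1 := by exact div_self hm0.ne'
  have hmem : ∀ i : ℕ, i ≤ m → pts i ∈ Set.Icc (0:ℝ) 1 := by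
    intro i hi
    constructor
    · positivity
    · rw [hpts]
      rw [div_le_one hm0]
      exact_mod_cast hi
  have hkey : ∀ i ∈ Finset.range m,
      g (pts (i+1)) - g (pts i) = (∫ t in pts i..pts (i+1), g' t) ∧
      0 ≤ (∫ t in pts i..pts (i+1), (g' t)^2) - m * (∫ t in pts i..pts (i+1), g' t)^2 ∧
      (∫ t in pts i..pts (i+1), (g' t)^2) - m * (∫ t in pts i..pts (i+1), g' t)^2 ≤
        C / m * ((∫ t in pts i..pts (i+1), |g' t|) + S / m) := by
    intro i hi
    rw [Finset.mem_range] at hi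
    apply key_interval C hC g g' hderiv hcont hlip S hle_S m hm0
    · exact (hmem i hi.le).1
    · rw [hpts]; apply div_le_div_of_nonneg_right _ hm0.le <;> push_cast <;> linarith
    · exact (hmem (i+1) hi).2
    · rw [hpts]; push_cast; field_simp; ring
  have hcast : ∀ i : ℕ, pts (i+1) = ((i:ℝ)+1)/m := by intro i; rw [hpts]; push_cast; ring
  -- integrability on subintervals
  have hint2 : ∀ k : ℕ, k < m → IntervalIntegrable (fun t => (g' t)^2)
      MeasureTheory.volume (pts k) (pts (k+1)) := by
    intro k hk
    apply ContinuousOn.intervalIntegrable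
    apply (hcont.pow 2).mono
    rw [Set.uIcc_of_le]
    · exact Set.Icc_subset_Icc (hmem k hk.le).1 (hmem (k+1) hk).2
    · rw [hpts]; apply div_le_div_of_nonneg_right _ hm0.le; push_cast; linarith
  have hintabs : ∀ k : ℕ, k < m → IntervalIntegrable (fun t => |g' t|)
      MeasureTheory.volume (pts k) (pts (k+1)) := by
    intro k hk
    apply ContinuousOn.intervalIntegrable
    apply hcont.abs.mono
    rw [Set.uIcc_of_le]
    · exact Set.Icc_subset_Icc (hmem k hk.le).1 (hmem (k+1) hk).2
    · rw [hpts]; apply div_le_div_of_nonneg_right _ hm0.le; push_cast; linarith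
  have hsum2 : ∑ i ∈ Finset.range m, (∫ t in pts i..pts (i+1), (g' t)^2)
      = ∫ t in (0:ℝ)..1, (g' t)^2 := by
    rw [← hpts0, ← hptsm]
    exact intervalIntegral.sum_integral_adjacent_intervals hint2
  have hsumabs : ∑ i ∈ Finset.range m, (∫ t in pts i..pts (i+1), |g' t|)
      = ∫ t in (0:ℝ)..1, |g' t| := by
    rw [← hpts0, ← hptsm]
    exact intervalIntegral.sum_integral_adjacent_intervals hintabs
  have hmain : (∫ t in (0 : ℝ)..1, (g' t) ^ 2) -
        m * ∑ i ∈ Finset.range m, (g (((i : ℝ) + 1) / m) - g ((i : ℝ) / m)) ^ 2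
      = ∑ i ∈ Finset.range m,
        ((∫ t in pts i..pts (i+1), (g' t)^2) - m * (∫ t in pts i..pts (i+1), g' t)^2) := by
    rw [← hsum2, Finset.mul_sum, ← Finset.sum_sub_distrib]
    apply Finset.sum_congr rfl
    intro i hi
    rw [show ((i:ℝ)+1)/(m:ℝ) = pts (i+1) from (hcast i).symm,
      show ((i:ℝ)/(m:ℝ)) = pts i from rfl, (hkey i hi).1]
  constructor
  · rw [hmain]
    exact Finset.sum_nonneg fun i hi => (hkey i hi).2.1
  · rw [hmain]
    calc ∑ i ∈ Finset.range m,
          ((∫ t in pts i..pts (i+1), (g' t)^2) - m * (∫ t in pts i..pts (i+1), g' t)^2)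
        ≤ ∑ i ∈ Finset.range m, (C / m * ((∫ t in pts i..pts (i+1), |g' t|) + S / m)) :=
          Finset.sum_le_sum fun i hi => (hkey i hi).2.2
      _ = C / m * ((∫ t in (0:ℝ)..1, |g' t|) + S) := by
          rw [← Finset.mul_sum, Finset.sum_add_distrib, hsumabs, Finset.sum_const,
            Finset.card_range, nsmul_eq_mul]
          congr 1
          field_simp
end

section
/- Fix an integer d ≥ 1 and reals β > 0 and L > 0. Let φ : ℝ → ℝ be the bump function φ(x) := exp( −1/(1 − (x/π)²) ) for |x| < π and φ(x) := 0 for |x| ≥ π, and set g(θ) := Π_{i=1}^d φ(θ_i) for θ = (θ₁,…,θ_d) ∈ ℝ^d. Then there exist ε > 0 and h₀ ∈ (0,1] such that for every h ∈ (0,h₀] and every θ₀ ∈ ℝ^d with θ₀ + h·[−π,π]^d ⊆ (−π,π)^d, the coefficients c(k) := ε·h^β·∫_{[−π,π]^d} e^{−i k·θ} g( (θ − θ₀)/h ) dθ, k ∈ ℤ^d, satisfy Σ_{k∈ℤ^d} (1 + ‖k‖₂^β)·|c(k)| ≤ L/4. -/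
open MeasureTheory

/-- The one-dimensional bump function `φ(x) = exp(−1/(1−(x/π)²))` for `|x| < π`, `0`
otherwise. -/
noncomputable def bump (x : ℝ) : ℝ :=
  if |x| < Real.pi then Real.exp (-(1 / (1 - (x / Real.pi) ^ 2))) else 0

/-- The d-dimensional bump function `g(θ) = ∏_{i=1}^d φ(θ_i)`. -/
noncomputable def bumpD (d : ℕ) (θ : Fin d → ℝ) : ℝ := ∏ i, bump (θ i)

/-- The Fourier coefficient
`c(k) = ε h^β ∫_{[-π,π]^d} e^{-i k·θ} g((θ−θ₀)/h) dθ` of the scaled and shifted bump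
perturbation. -/
noncomputable def bumpCoeff (d : ℕ) (β ε h : ℝ) (θ₀ : Fin d → ℝ) (k : Fin d → ℤ) : ℂ :=
  ((ε * h ^ β : ℝ) : ℂ) *
    ∫ θ in Set.Icc (fun _ : Fin d => -Real.pi) (fun _ => Real.pi),
      Complex.exp (-(Complex.I * ((∑ i, (k i : ℝ) * θ i : ℝ) : ℂ))) *
        ((bumpD d (fun i => (θ i - θ₀ i) / h) : ℝ) : ℂ)

section BumpBasic

lemma bump_eq : bump = fun x => expNegInvGlue (1 - (x / Real.pi) ^ 2) := by
  funext x
  have hπ : (0:ℝ) < Real.pi := Real.pi_pos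
  rw [bump, expNegInvGlue]
  rcases lt_or_ge |x| Real.pi with h | h
  · have h1 : |x / Real.pi| < 1 := by
      rw [abs_div, abs_of_pos hπ, div_lt_one hπ]; exact h
    have h2 : (x / Real.pi) ^ 2 < 1 := by
      simpa using (sq_lt_one_iff_abs_lt_one _).mpr h1
    rw [if_pos h, if_neg (by linarith)]
    rw [one_div]
  · have h1 : (1:ℝ) ≤ |x / Real.pi| := by
      rw [abs_div, abs_of_pos hπ, le_div_iff₀ hπ]; simpa using h
    have h2 : (1:ℝ) ≤ (x / Real.pi) ^ 2 := by
      simpa using (one_le_sq_iff_one_le_abs _).mpr h1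
    rw [if_neg (not_lt.mpr h), if_pos (by linarith)]

lemma contDiff_bump : ContDiff ℝ (⊤:ℕ∞) bump := by
  rw [bump_eq]
  have h : ContDiff ℝ (⊤:ℕ∞) (expNegInvGlue ∘ fun x : ℝ => 1 - (x / Real.pi) ^ 2) :=
    expNegInvGlue.contDiff.comp
      (contDiff_const.sub (((contDiff_id.div_const Real.pi)).pow 2))
  exact h

lemma bump_eq_zero {x : ℝ} (h : Real.pi ≤ |x|) : bump x = 0 := by
  rw [bump, if_neg (not_lt.mpr h)]

lemma bump_compact_support : HasCompactSupport bump := by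
  apply HasCompactSupport.intro (isCompact_Icc (a := -Real.pi) (b := Real.pi))
  intro x hx
  apply bump_eq_zero
  rw [Set.mem_Icc, not_and_or] at hx
  rw [le_abs]
  rcases hx with h | h
  · right; push_neg at h; linarith
  · left; push_neg at h; linarith

/-- The complex-valued bump function. -/
noncomputable def bumpC : ℝ → ℂ := fun x => (bump x : ℂ)

lemma contDiff_bumpC : ContDiff ℝ (⊤:ℕ∞) bumpC :=
  Complex.ofRealCLM.contDiff.comp contDiff_bump

lemma bumpC_compact_support : HasCompactSupport bumpC := by
  apply HasCompactSupport.comp_left bump_compact_support (g := fun r : ℝ => (r:ℂ))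
  simp

/-- The bump function as a Schwartz map. -/
noncomputable def bumpS : SchwartzMap ℝ ℂ where
  toFun := bumpC
  smooth' := contDiff_bumpC
  decay' := by
    intro k n
    have hcont : Continuous fun x : ℝ => ‖x‖ ^ k * ‖iteratedFDeriv ℝ n bumpC x‖ :=
      ((continuous_norm.pow k)).mul
        ((contDiff_bumpC.continuous_iteratedFDeriv (by exact_mod_cast le_top)).norm)
    have hsupp : HasCompactSupport fun x : ℝ => ‖x‖ ^ k * ‖iteratedFDeriv ℝ n bumpC x‖ :=
      ((bumpC_compact_support.iteratedFDeriv n).norm).mul_left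
    obtain ⟨x₀, hx₀⟩ := hcont.exists_forall_ge_of_hasCompactSupport hsupp
    exact ⟨_, hx₀⟩

lemma bumpS_apply : ⇑bumpS = bumpC := rfl

end BumpBasic

section Fourier

open Real
open scoped FourierTransform

lemma one_add_pow_le (a : ℝ) (ha : 0 ≤ a) (n : ℕ) : (1 + a) ^ n ≤ 2 ^ n * (1 + a ^ n) := by
  rcases le_total a 1 with h | h
  · have h2 : (1 + a) ^ n ≤ 2 ^ n := pow_le_pow_left₀ (by linarith) (by linarith) n
    nlinarith [pow_nonneg ha n, pow_pos (zero_lt_two (α := ℝ)) n]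
  · have h2 : (1 + a) ^ n ≤ (2 * a) ^ n := pow_le_pow_left₀ (by linarith) (by linarith) n
    rw [mul_pow] at h2
    nlinarith [pow_pos (zero_lt_two (α := ℝ)) n, pow_nonneg ha n]

lemma fourier_decay (n : ℕ) : ∃ D : ℝ, 1 ≤ D ∧
    ∀ w : ℝ, ‖𝓕 bumpC w‖ * (1 + |w|) ^ n ≤ D := by
  set F := SchwartzMap.fourierTransformCLM ℂ bumpS with hF
  obtain ⟨C0, hC0⟩ := F.decay 0 0
  obtain ⟨C1, hC1⟩ := F.decay n 0
  refine ⟨2 ^ n * (|C0| + |C1|) + 1, ?_, fun w => ?_⟩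
  · have hnn : (0:ℝ) ≤ 2 ^ n * (|C0| + |C1|) := by positivity
    linarith
  have hFw : 𝓕 bumpC w = F w := by
    rw [hF, SchwartzMap.fourierTransformCLM_apply, SchwartzMap.fourier_coe, bumpS_apply]
  have h0 : ‖F w‖ ≤ |C0| := by
    have := hC0.2 w
    simp only [pow_zero, one_mul, norm_iteratedFDeriv_zero] at this
    exact this.trans (le_abs_self _)
  have h1 : |w| ^ n * ‖F w‖ ≤ |C1| := by
    have := hC1.2 w
    simp only [norm_iteratedFDeriv_zero, Real.norm_eq_abs] at this
    exact this.trans (le_abs_self _)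
  have hb : (1 + |w|) ^ n ≤ 2 ^ n * (1 + |w| ^ n) := one_add_pow_le _ (abs_nonneg w) n
  have hnn : (0:ℝ) ≤ ‖F w‖ := norm_nonneg _
  calc ‖𝓕 bumpC w‖ * (1 + |w|) ^ n ≤ ‖F w‖ * (2 ^ n * (1 + |w| ^ n)) := by
        rw [hFw]; exact mul_le_mul_of_nonneg_left hb hnn
    _ = 2 ^ n * (‖F w‖ + |w| ^ n * ‖F w‖) := by ring
    _ ≤ 2 ^ n * (|C0| + |C1|) := by
        have : ‖F w‖ + |w| ^ n * ‖F w‖ ≤ |C0| + |C1| := add_le_add h0 h1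
        exact mul_le_mul_of_nonneg_left this (by positivity)
    _ ≤ 2 ^ n * (|C0| + |C1|) + 1 := by linarith

lemma oneD_eq (h : ℝ) (hh : 0 < h) (c θ₀ : ℝ) :
    (∫ x : ℝ, Complex.exp (-(Complex.I * ((c * x : ℝ) : ℂ))) * bumpC ((x - θ₀) / h))
      = Complex.exp (-(Complex.I * ((c * θ₀ : ℝ) : ℂ))) *
          ((h : ℂ) * 𝓕 bumpC (c * h / (2 * Real.pi))) := by
  have hπ := Real.pi_pos
  calc (∫ x : ℝ, Complex.exp (-(Complex.I * ((c * x : ℝ) : ℂ))) * bumpC ((x - θ₀) / h))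
      = ∫ x : ℝ, (fun t : ℝ =>
          Complex.exp (-(Complex.I * ((c * (t + θ₀) : ℝ) : ℂ))) * bumpC (t / h)) (x - θ₀) := by
        congr 1; funext x; simp [sub_add_cancel]
    _ = ∫ t : ℝ, Complex.exp (-(Complex.I * ((c * (t + θ₀) : ℝ) : ℂ))) * bumpC (t / h) :=
        integral_sub_right_eq_self (μ := volume)
          (fun t : ℝ => Complex.exp (-(Complex.I * ((c * (t + θ₀) : ℝ) : ℂ))) * bumpC (t / h)) θ₀
    _ = ∫ t : ℝ, Complex.exp (-(Complex.I * ((c * θ₀ : ℝ) : ℂ))) *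
          (Complex.exp (-(Complex.I * ((c * t : ℝ) : ℂ))) * bumpC (t / h)) := by
        congr 1; funext t
        rw [← mul_assoc, ← Complex.exp_add]
        congr 1
        push_cast; ring
    _ = Complex.exp (-(Complex.I * ((c * θ₀ : ℝ) : ℂ))) *
          ∫ t : ℝ, Complex.exp (-(Complex.I * ((c * t : ℝ) : ℂ))) * bumpC (t / h) :=
        integral_const_mul _ _
    _ = Complex.exp (-(Complex.I * ((c * θ₀ : ℝ) : ℂ))) *
          ((h : ℂ) * 𝓕 bumpC (c * h / (2 * Real.pi))) := by
        congr 1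
        have key : ∀ t : ℝ, Complex.exp (-(Complex.I * ((c * t : ℝ) : ℂ))) * bumpC (t / h)
            = (fun u : ℝ => Complex.exp (-(Complex.I * ((c * (h * u) : ℝ) : ℂ))) * bumpC u)
              (t / h) := by
          intro t
          simp only []
          rw [mul_div_cancel₀ _ hh.ne']
        rw [integral_congr_ae (Filter.Eventually.of_forall key),
          MeasureTheory.Measure.integral_comp_div
            (fun u : ℝ => Complex.exp (-(Complex.I * ((c * (h * u) : ℝ) : ℂ))) * bumpC u) h,
          abs_of_pos hh, Complex.real_smul]
        congr 1
        rw [Real.fourier_real_eq_integral_exp_smul]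
        congr 1
        funext u
        rw [smul_eq_mul]
        congr 2
        have harg : (-2 * Real.pi * u * (c * h / (2 * Real.pi)) : ℝ) = -(c * (h * u)) := by
          field_simp
        rw [harg]
        push_cast
        ring

end Fourier

section Sums

lemma one_add_sum_le_prod {ι : Type*} (s : Finset ι) (a : ι → ℝ) (ha : ∀ i ∈ s, 0 ≤ a i) :
    1 + ∑ i ∈ s, a i ≤ ∏ i ∈ s, (1 + a i) := by
  classical
  induction s using Finset.cons_induction with
  | empty => simp
  | cons j s hj ih =>
    rw [Finset.sum_cons, Finset.prod_cons]
    have haj : 0 ≤ a j := ha j (Finset.mem_cons_self _ _)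
    have hs : ∀ i ∈ s, 0 ≤ a i := fun i hi => ha i (Finset.mem_cons_of_mem hi)
    have h1 : 1 + ∑ i ∈ s, a i ≤ ∏ i ∈ s, (1 + a i) := ih hs
    have hsum : 0 ≤ ∑ i ∈ s, a i := Finset.sum_nonneg hs
    nlinarith

lemma nat_tail_bound (h : ℝ) (hh0 : 0 < h) :
    Summable (fun n : ℕ => ((1 + h * ((n : ℝ) + 1)) ^ 2)⁻¹) ∧
    (∑' n : ℕ, ((1 + h * ((n : ℝ) + 1)) ^ 2)⁻¹) ≤ 1 / h := by
  set a : ℕ → ℝ := fun n => (h * (1 + h * n))⁻¹ with ha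
  have key : ∀ n : ℕ, ((1 + h * ((n : ℝ) + 1)) ^ 2)⁻¹ ≤ a n - a (n + 1) := by
    intro n
    have p0 : (0:ℝ) < 1 + h * n := by positivity
    have p1 : (0:ℝ) < 1 + h * ((n:ℝ) + 1) := by positivity
    have e1 : a (n + 1) = (h * (1 + h * ((n:ℝ) + 1)))⁻¹ := by
      rw [ha]; push_cast; ring_nf
    have e4 : a n - a (n + 1) = ((1 + h * n) * (1 + h * ((n:ℝ) + 1)))⁻¹ := by
      rw [e1, ha]
      rw [inv_sub_inv (by positivity) (by positivity)]
      rw [div_eq_iff (by positivity)]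
      field_simp
      ring
    rw [e4]
    apply inv_anti₀ (by positivity)
    nlinarith
  have hb : ∀ n : ℕ, ∑ i ∈ Finset.range n, ((1 + h * ((i : ℝ) + 1)) ^ 2)⁻¹ ≤ 1 / h := by
    intro n
    calc ∑ i ∈ Finset.range n, ((1 + h * ((i : ℝ) + 1)) ^ 2)⁻¹
        ≤ ∑ i ∈ Finset.range n, (a i - a (i + 1)) := Finset.sum_le_sum (fun i _ => key i)
      _ = a 0 - a n := Finset.sum_range_sub' a n
      _ ≤ a 0 := by
          have : 0 ≤ a n := by rw [ha]; positivity
          linarith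
      _ = 1 / h := by rw [ha]; simp [one_div]
  have hs : Summable (fun n : ℕ => ((1 + h * ((n : ℝ) + 1)) ^ 2)⁻¹) :=
    summable_of_sum_range_le (fun n => by positivity) hb
  exact ⟨hs, hs.tsum_le_of_sum_range_le hb⟩

lemma int_sum_bound (h : ℝ) (hh0 : 0 < h) :
    Summable (fun m : ℤ => ((1 + h * |(m : ℝ)|) ^ 2)⁻¹) ∧
    (∑' m : ℤ, ((1 + h * |(m : ℝ)|) ^ 2)⁻¹) ≤ 1 + 2 / h := by
  obtain ⟨hs, hb⟩ := nat_tail_bound h hh0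
  have e1 : (fun n : ℕ => ((1 + h * |((((n : ℤ) + 1) : ℤ) : ℝ)|) ^ 2)⁻¹)
      = fun n : ℕ => ((1 + h * ((n : ℝ) + 1)) ^ 2)⁻¹ := by
    funext n
    congr 2
    rw [abs_of_nonneg (by push_cast; positivity)]
    push_cast; ring
  have e2 : (fun n : ℕ => ((1 + h * |((-(((n : ℤ)) + 1) : ℤ) : ℝ)|) ^ 2)⁻¹)
      = fun n : ℕ => ((1 + h * ((n : ℝ) + 1)) ^ 2)⁻¹ := by
    funext n
    congr 2
    push_cast
    rw [abs_neg, abs_of_nonneg (by positivity)]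
  constructor
  · apply Summable.of_add_one_of_neg_add_one
    · exact e1 ▸ hs
    · exact e2 ▸ hs
  · rw [tsum_of_add_one_of_neg_add_one (e1 ▸ hs) (e2 ▸ hs)]
    have t1 : (∑' n : ℕ, ((1 + h * |((((n : ℤ) + 1) : ℤ) : ℝ)|) ^ 2)⁻¹) ≤ 1 / h := by
      rw [e1]; exact hb
    have t2 : (∑' n : ℕ, ((1 + h * |((-(((n : ℤ)) + 1) : ℤ) : ℝ)|) ^ 2)⁻¹) ≤ 1 / h := by
      rw [e2]; exact hb
    have t0 : ((1 + h * |((0 : ℤ) : ℝ)|) ^ 2)⁻¹ = 1 := by norm_num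
    rw [t0]
    have : (2:ℝ) / h = 1/h + 1/h := by ring
    rw [this]
    linarith [t1, t2]

set_option maxHeartbeats 800000 in
lemma summable_pi_prod (d : ℕ) (g : ℤ → ℝ) (hg0 : ∀ m, 0 ≤ g m) (hg : Summable g) :
    Summable (fun k : Fin d → ℤ => ∏ i, g (k i)) ∧
    (∑' k : Fin d → ℤ, ∏ i, g (k i)) = (∑' m, g m) ^ d := by
  induction d with
  | zero =>
    have hs : HasSum (fun k : Fin 0 → ℤ => ∏ i, g (k i)) 1 := by
      have : (∏ i : Fin 0, g ((default : Fin 0 → ℤ) i)) = 1 := by simp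
      simpa [this] using hasSum_single (f := fun k : Fin 0 → ℤ => ∏ i, g (k i))
        (default : Fin 0 → ℤ) (fun b hb => absurd (Subsingleton.elim b default) hb)
    exact ⟨hs.summable, by rw [hs.tsum_eq]; simp⟩
  | succ d ih =>
    obtain ⟨ihs, iht⟩ := ih
    have hprod : Summable (fun p : ℤ × (Fin d → ℤ) => g p.1 * ∏ i, g (p.2 i)) := by
      apply Summable.mul_of_nonneg hg ihs (fun m => hg0 m)
      exact fun k => Finset.prod_nonneg fun i _ => hg0 _
    have htsum : (∑' m, g m) * (∑' k : Fin d → ℤ, ∏ i, g (k i))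
        = ∑' p : ℤ × (Fin d → ℤ), g p.1 * ∏ i, g (p.2 i) :=
      Summable.tsum_mul_tsum hg ihs hprod
    set e : ℤ × (Fin d → ℤ) ≃ (Fin (d+1) → ℤ) := Fin.consEquiv (fun _ => ℤ) with he
    have hcomp : ∀ p : ℤ × (Fin d → ℤ),
        (∏ i : Fin (d+1), g ((e p) i)) = g p.1 * ∏ i : Fin d, g (p.2 i) := by
      intro p
      rw [Fin.prod_univ_succ]
      simp [he, Fin.consEquiv]
    have hcompS : Summable ((fun k : Fin (d+1) → ℤ => ∏ i, g (k i)) ∘ e) :=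
      hprod.congr (fun p => (hcomp p).symm)
    constructor
    · exact e.summable_iff.mp hcompS
    · rw [← e.tsum_eq (fun k : Fin (d+1) → ℤ => ∏ i, g (k i))]
      rw [tsum_congr hcomp, ← htsum, iht]
      ring

end Sums

section Factorization

lemma coeff_factor (d : ℕ) (β ε h : ℝ) (hh : 0 < h) (θ₀ : Fin d → ℝ)
    (hsupp : ∀ u : Fin d → ℝ, (∀ i, |u i| ≤ Real.pi) →
      ∀ i, θ₀ i + h * u i ∈ Set.Ioo (-Real.pi) Real.pi)
    (k : Fin d → ℤ) :
    ‖bumpCoeff d β ε h θ₀ k‖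
      = |ε * h ^ β| * ∏ i, ‖∫ x : ℝ,
          Complex.exp (-(Complex.I * (((k i : ℝ) * x : ℝ) : ℂ))) * bumpC ((x - θ₀ i) / h)‖ := by
  rw [bumpCoeff, norm_mul, Complex.norm_real, Real.norm_eq_abs]
  congr 1
  have hzero : ∀ θ : Fin d → ℝ,
      θ ∉ Set.Icc (fun _ : Fin d => -Real.pi) (fun _ => Real.pi) →
      Complex.exp (-(Complex.I * ((∑ i, (k i : ℝ) * θ i : ℝ) : ℂ))) *
        ((bumpD d (fun i => (θ i - θ₀ i) / h) : ℝ) : ℂ) = 0 := by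
    intro θ hθ
    rw [Set.mem_Icc, not_and_or] at hθ
    have hex : ∃ i, θ i < -Real.pi ∨ Real.pi < θ i := by
      rcases hθ with hl | hr
      · rw [Pi.le_def] at hl; push_neg at hl
        obtain ⟨i, hi⟩ := hl; exact ⟨i, Or.inl hi⟩
      · rw [Pi.le_def] at hr; push_neg at hr
        obtain ⟨i, hi⟩ := hr; exact ⟨i, Or.inr hi⟩
    obtain ⟨i, hi⟩ := hex
    have hbz : bump ((θ i - θ₀ i) / h) = 0 := by
      by_contra hv
      have hv' : |(θ i - θ₀ i) / h| < Real.pi :=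
        lt_of_not_ge (fun hle => hv (bump_eq_zero hle))
      have := hsupp (fun _ => (θ i - θ₀ i) / h) (fun _ => hv'.le) i
      rw [Set.mem_Ioo] at this
      have heq : θ₀ i + h * ((θ i - θ₀ i) / h) = θ i := by
        field_simp; ring
      rw [heq] at this
      rcases hi with hi | hi <;> linarith [this.1, this.2]
    have : bumpD d (fun i => (θ i - θ₀ i) / h) = 0 := by
      rw [bumpD]
      exact Finset.prod_eq_zero (Finset.mem_univ i) hbz
    rw [this]
    simp
  rw [setIntegral_eq_integral_of_forall_compl_eq_zero hzero]
  have hfac : ∀ θ : Fin d → ℝ,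
      Complex.exp (-(Complex.I * ((∑ i, (k i : ℝ) * θ i : ℝ) : ℂ))) *
        ((bumpD d (fun i => (θ i - θ₀ i) / h) : ℝ) : ℂ)
      = ∏ i, (Complex.exp (-(Complex.I * (((k i : ℝ) * θ i : ℝ) : ℂ))) *
          bumpC ((θ i - θ₀ i) / h)) := by
    intro θ
    have hexp : (-(Complex.I * ((∑ i, (k i : ℝ) * θ i : ℝ) : ℂ)))
        = ∑ i, -(Complex.I * (((k i : ℝ) * θ i : ℝ) : ℂ)) := by
      push_cast
      rw [Finset.mul_sum, ← Finset.sum_neg_distrib]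
    have hbd : ((bumpD d (fun i => (θ i - θ₀ i) / h) : ℝ) : ℂ)
        = ∏ i, bumpC ((θ i - θ₀ i) / h) := by
      unfold bumpD bumpC
      push_cast
      rfl
    rw [hexp, Complex.exp_sum, hbd, Finset.prod_mul_distrib]
  rw [integral_congr_ae (Filter.Eventually.of_forall hfac)]
  rw [MeasureTheory.integral_fintype_prod_volume_eq_prod
    (f := fun i x => Complex.exp (-(Complex.I * (((k i : ℝ) * x : ℝ) : ℂ))) *
      bumpC ((x - θ₀ i) / h))]
  rw [norm_prod]

end Factorization

section Main

open Real
open scoped FourierTransform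

/-- The key estimate in the proof of the minimax lower bound (Theorem 6.1): the Fourier
coefficients of the scaled bump perturbation satisfy
`∑_{k∈ℤ^d} (1+‖k‖₂^β)|c(k)| ≤ L/4` for a suitable `ε > 0`, uniformly over small scales
`h` and admissible centers `θ₀`. -/
theorem stmt17 (d : ℕ) (hd : 1 ≤ d) (β L : ℝ) (hβ : 0 < β) (hL : 0 < L) :
    ∃ ε > (0 : ℝ), ∃ h₀ ∈ Set.Ioc (0 : ℝ) 1, ∀ h ∈ Set.Ioc (0 : ℝ) h₀,
      ∀ θ₀ : Fin d → ℝ,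
        (∀ u : Fin d → ℝ, (∀ i, |u i| ≤ Real.pi) →
          ∀ i, θ₀ i + h * u i ∈ Set.Ioo (-Real.pi) Real.pi) →
        Summable (fun k : Fin d → ℤ =>
          (1 + Real.sqrt (∑ i, ((k i : ℝ)) ^ 2) ^ β) * ‖bumpCoeff d β ε h θ₀ k‖) ∧
        (∑' k : Fin d → ℤ,
          (1 + Real.sqrt (∑ i, ((k i : ℝ)) ^ 2) ^ β) * ‖bumpCoeff d β ε h θ₀ k‖) ≤
          L / 4 := by
  classical
  set N := ⌈β⌉₊ with hN
  obtain ⟨D, hD1, hDbound⟩ := fourier_decay (N + 2)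
  have hD0 : (0:ℝ) < D := lt_of_lt_of_le one_pos hD1
  have hπ : (0:ℝ) < Real.pi := Real.pi_pos
  set D2 : ℝ := D * (2 * Real.pi) ^ (N + 2) with hD2def
  have hD2 : (0:ℝ) < D2 := mul_pos hD0 (pow_pos (by linarith) _)
  have hX : (0:ℝ) < (3 * D2) ^ d := pow_pos (by linarith) d
  set ε : ℝ := L / (8 * (3 * D2) ^ d) with hεdef
  have hε : 0 < ε := by
    apply div_pos hL
    positivity
  refine ⟨ε, hε, 1, ⟨one_pos, le_refl 1⟩, ?_⟩
  intro h hh θ₀ hθ₀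
  obtain ⟨hh0, hh1⟩ := hh
  have hhb : (0:ℝ) < h ^ β := Real.rpow_pos_of_pos hh0 β
  -- per-coordinate key bound
  have key : ∀ c θc : ℝ,
      ‖∫ x : ℝ, Complex.exp (-(Complex.I * ((c * x : ℝ) : ℂ))) *
        bumpC ((x - θc) / h)‖ * (1 + h * |c|) ^ (N + 2) ≤ h * D2 := by
    intro c θc
    rw [oneD_eq h hh0 c θc, norm_mul, norm_mul]
    have habs1 : ‖Complex.exp (-(Complex.I * ((c * θc : ℝ) : ℂ)))‖ = 1 := by
      rw [Complex.norm_exp]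
      norm_num
    rw [habs1, one_mul, Complex.norm_real, Real.norm_eq_abs, abs_of_pos hh0]
    set w := c * h / (2 * Real.pi) with hw
    have hDw : ‖𝓕 bumpC w‖ * (1 + |w|) ^ (N + 2) ≤ D := hDbound w
    have hwabs : |w| = |c| * h / (2 * Real.pi) := by
      rw [hw, abs_div, abs_mul, abs_of_pos hh0, abs_of_pos (by linarith : (0:ℝ) < 2 * Real.pi)]
    have hineq : 1 + h * |c| ≤ 2 * Real.pi * (1 + |w|) := by
      have he : 2 * Real.pi * (1 + |w|) = 2 * Real.pi + |c| * h := by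
        rw [hwabs]
        field_simp
      rw [he]
      nlinarith [Real.pi_gt_three, abs_nonneg c]
    have hpow : (1 + h * |c|) ^ (N + 2) ≤ (2 * Real.pi) ^ (N + 2) * (1 + |w|) ^ (N + 2) := by
      rw [← mul_pow]
      exact pow_le_pow_left₀ (by positivity) hineq _
    have hnorm : ‖𝓕 bumpC w‖ = ‖𝓕 bumpC w‖ := rfl
    calc h * ‖𝓕 bumpC w‖ * (1 + h * |c|) ^ (N + 2)
        ≤ h * ‖𝓕 bumpC w‖ * ((2 * Real.pi) ^ (N + 2) * (1 + |w|) ^ (N + 2)) := by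
          rw [hnorm]
          exact mul_le_mul_of_nonneg_left hpow (by positivity)
      _ = h * (‖𝓕 bumpC w‖ * (1 + |w|) ^ (N + 2)) * (2 * Real.pi) ^ (N + 2) := by ring
      _ ≤ h * D * (2 * Real.pi) ^ (N + 2) := by
          have := mul_le_mul_of_nonneg_left hDw hh0.le
          exact mul_le_mul_of_nonneg_right this (by positivity)
      _ = h * D2 := by rw [hD2def]; ring
  -- majorant
  set G : ℤ → ℝ := fun m => h * D2 * ((1 + h * |(m:ℝ)|) ^ 2)⁻¹ with hGdef
  have hG0 : ∀ m, 0 ≤ G m := by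
    intro m
    rw [hGdef]
    positivity
  obtain ⟨hbase, hbaseT⟩ := int_sum_bound h hh0
  have hGsum : Summable G := by
    rw [hGdef]
    exact hbase.mul_left (h * D2)
  have hGT : (∑' m, G m) ≤ 3 * D2 := by
    rw [hGdef]
    rw [tsum_mul_left]
    have h1 : h * D2 * (∑' m : ℤ, ((1 + h * |(m:ℝ)|) ^ 2)⁻¹) ≤ h * D2 * (1 + 2 / h) :=
      mul_le_mul_of_nonneg_left hbaseT (by positivity)
    have h2 : h * D2 * (1 + 2 / h) = h * D2 + 2 * D2 := by
      field_simp
    nlinarith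
  have keyG : ∀ (i : Fin d) (m : ℤ),
      (1 + h * |(m:ℝ)|) ^ N * ‖∫ x : ℝ,
        Complex.exp (-(Complex.I * (((m:ℝ) * x : ℝ) : ℂ))) * bumpC ((x - θ₀ i) / h)‖ ≤ G m := by
    intro i m
    have hk := key (m:ℝ) (θ₀ i)
    have hp : (0:ℝ) < 1 + h * |(m:ℝ)| := by positivity
    rw [show G m = h * D2 / (1 + h * |(m:ℝ)|) ^ 2 from by
      simp only [hGdef]; rw [div_eq_mul_inv]]
    rw [le_div_iff₀ (by positivity)]
    calc (1 + h * |(m:ℝ)|) ^ N * ‖∫ x : ℝ,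
          Complex.exp (-(Complex.I * (((m:ℝ) * x : ℝ) : ℂ))) * bumpC ((x - θ₀ i) / h)‖
          * (1 + h * |(m:ℝ)|) ^ 2
        = ‖∫ x : ℝ,
            Complex.exp (-(Complex.I * (((m:ℝ) * x : ℝ) : ℂ))) * bumpC ((x - θ₀ i) / h)‖
          * ((1 + h * |(m:ℝ)|) ^ N * (1 + h * |(m:ℝ)|) ^ 2) := by ring
      _ = ‖∫ x : ℝ,
            Complex.exp (-(Complex.I * (((m:ℝ) * x : ℝ) : ℂ))) * bumpC ((x - θ₀ i) / h)‖
          * (1 + h * |(m:ℝ)|) ^ (N + 2) := by rw [← pow_add]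
      _ ≤ h * D2 := hk
  -- the per-k bound
  have hW : ∀ k : Fin d → ℤ,
      (1 + Real.sqrt (∑ i, ((k i : ℝ)) ^ 2) ^ β) * ‖bumpCoeff d β ε h θ₀ k‖
        ≤ 2 * ε * ∏ i, G (k i) := by
    intro k
    set s : ℝ := Real.sqrt (∑ i, ((k i : ℝ)) ^ 2) with hsdef
    have hs0 : 0 ≤ s := Real.sqrt_nonneg _
    have hl1 : s ≤ ∑ i, |(k i : ℝ)| := by
      have h1 : (∑ i, ((k i:ℝ))^2) ≤ (∑ i, |(k i:ℝ)|)^2 := by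
        have := Finset.sum_sq_le_sq_sum_of_nonneg
          (s := Finset.univ) (f := fun i => |(k i:ℝ)|) (fun i _ => abs_nonneg _)
        simpa [sq_abs] using this
      calc s ≤ Real.sqrt ((∑ i, |(k i:ℝ)|)^2) := Real.sqrt_le_sqrt h1
        _ = ∑ i, |(k i:ℝ)| := Real.sqrt_sq (Finset.sum_nonneg fun i _ => abs_nonneg _)
    have hP : 1 + h * s ≤ ∏ i, (1 + h * |(k i:ℝ)|) := by
      have h1 : h * s ≤ ∑ i, h * |(k i:ℝ)| := by
        rw [← Finset.mul_sum]
        exact mul_le_mul_of_nonneg_left hl1 hh0.le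
      calc 1 + h * s ≤ 1 + ∑ i, h * |(k i:ℝ)| := by linarith
        _ ≤ ∏ i, (1 + h * |(k i:ℝ)|) :=
            one_add_sum_le_prod _ _ (fun i _ => by positivity)
    have hPn : (1 + h * s) ^ N ≤ ∏ i, (1 + h * |(k i:ℝ)|) ^ N := by
      rw [Finset.prod_pow]
      exact pow_le_pow_left₀ (by positivity) hP N
    have hsβ : s ^ β ≤ (h ^ β)⁻¹ * ∏ i, (1 + h * |(k i:ℝ)|) ^ N := by
      have hmul : ((h:ℝ) * s) ^ β = h ^ β * s ^ β := Real.mul_rpow hh0.le hs0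
      have e0 : s ^ β = (h ^ β)⁻¹ * (h * s) ^ β := by
        rw [hmul, ← mul_assoc, inv_mul_cancel₀ hhb.ne', one_mul]
      have c1 : (h * s) ^ β ≤ (1 + h * s) ^ β :=
        Real.rpow_le_rpow (by positivity) (by linarith) hβ.le
      have c2 : (1 + h * s) ^ β ≤ (1 + h * s) ^ ((N:ℕ):ℝ) := by
        apply Real.rpow_le_rpow_of_exponent_le
        · nlinarith [mul_nonneg hh0.le hs0]
        · exact_mod_cast Nat.le_ceil β
      have c3 : (1 + h * s) ^ ((N:ℕ):ℝ) = (1 + h * s) ^ N := Real.rpow_natCast _ N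
      rw [e0]
      apply mul_le_mul_of_nonneg_left _ (inv_nonneg.mpr hhb.le)
      exact c1.trans ((c2.trans_eq c3).trans hPn)
    have hone : 1 ≤ (h ^ β)⁻¹ * ∏ i, (1 + h * |(k i:ℝ)|) ^ N := by
      have hinv : 1 ≤ (h ^ β)⁻¹ := by
        rw [le_inv_comm₀ one_pos hhb]
        simpa using Real.rpow_le_one hh0.le hh1 hβ.le
      have hpr : 1 ≤ ∏ i, (1 + h * |(k i:ℝ)|) ^ N := by
        calc (1:ℝ) = ∏ _i : Fin d, 1 := by simp
          _ ≤ ∏ i, (1 + h * |(k i:ℝ)|) ^ N := by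
              apply Finset.prod_le_prod
              · intros; norm_num
              · intro i _
                apply one_le_pow₀
                nlinarith [mul_nonneg hh0.le (abs_nonneg ((k i:ℝ)))]
      calc (1:ℝ) = 1 * 1 := by ring
        _ ≤ (h ^ β)⁻¹ * ∏ i, (1 + h * |(k i:ℝ)|) ^ N := mul_le_mul hinv hpr one_pos.le
            (le_trans one_pos.le hinv)
    have hWle : 1 + s ^ β ≤ 2 * ((h ^ β)⁻¹ * ∏ i, (1 + h * |(k i:ℝ)|) ^ N) := by
      linarith
    have habsc : ‖bumpCoeff d β ε h θ₀ k‖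
        = (ε * h ^ β) * ∏ i, ‖∫ x : ℝ,
            Complex.exp (-(Complex.I * (((k i : ℝ) * x : ℝ) : ℂ))) * bumpC ((x - θ₀ i) / h)‖ := by
      rw [coeff_factor d β ε h hh0 θ₀ hθ₀ k, abs_of_pos (mul_pos hε hhb)]
    have habs_nonneg : 0 ≤ ‖bumpCoeff d β ε h θ₀ k‖ := norm_nonneg _
    calc (1 + s ^ β) * ‖bumpCoeff d β ε h θ₀ k‖
        ≤ (2 * ((h ^ β)⁻¹ * ∏ i, (1 + h * |(k i:ℝ)|) ^ N)) *
            ‖bumpCoeff d β ε h θ₀ k‖ :=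
          mul_le_mul_of_nonneg_right hWle habs_nonneg
      _ = 2 * ε * ((h ^ β)⁻¹ * h ^ β) * ((∏ i, (1 + h * |(k i:ℝ)|) ^ N) *
            ∏ i, ‖∫ x : ℝ,
              Complex.exp (-(Complex.I * (((k i : ℝ) * x : ℝ) : ℂ))) * bumpC ((x - θ₀ i) / h)‖) := by
          rw [habsc]; ring
      _ = 2 * ε * ∏ i, ((1 + h * |(k i:ℝ)|) ^ N *
            ‖∫ x : ℝ,
              Complex.exp (-(Complex.I * (((k i : ℝ) * x : ℝ) : ℂ))) * bumpC ((x - θ₀ i) / h)‖) := by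
          rw [inv_mul_cancel₀ hhb.ne', ← Finset.prod_mul_distrib]
          ring
      _ ≤ 2 * ε * ∏ i, G (k i) := by
          apply mul_le_mul_of_nonneg_left _ (by positivity)
          apply Finset.prod_le_prod
          · intro i _
            exact mul_nonneg (by positivity) (norm_nonneg _)
          · intro i _
            exact keyG i (k i)
  obtain ⟨hSp, hTp⟩ := summable_pi_prod d G hG0 hGsum
  have hMaj : Summable (fun k : Fin d → ℤ => 2 * ε * ∏ i, G (k i)) := hSp.mul_left _
  have htarget_nonneg : ∀ k : Fin d → ℤ,
      0 ≤ (1 + Real.sqrt (∑ i, ((k i : ℝ)) ^ 2) ^ β) * ‖bumpCoeff d β ε h θ₀ k‖ := by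
    intro k
    apply mul_nonneg _ (norm_nonneg _)
    have := Real.rpow_nonneg (Real.sqrt_nonneg (∑ i, ((k i : ℝ)) ^ 2)) β
    linarith
  have hSummable : Summable (fun k : Fin d → ℤ =>
      (1 + Real.sqrt (∑ i, ((k i : ℝ)) ^ 2) ^ β) * ‖bumpCoeff d β ε h θ₀ k‖) :=
    Summable.of_nonneg_of_le htarget_nonneg hW hMaj
  refine ⟨hSummable, ?_⟩
  calc (∑' k : Fin d → ℤ,
        (1 + Real.sqrt (∑ i, ((k i : ℝ)) ^ 2) ^ β) * ‖bumpCoeff d β ε h θ₀ k‖)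
      ≤ ∑' k : Fin d → ℤ, 2 * ε * ∏ i, G (k i) := hSummable.tsum_le_tsum hW hMaj
    _ = 2 * ε * ∑' k : Fin d → ℤ, ∏ i, G (k i) := tsum_mul_left
    _ = 2 * ε * (∑' m, G m) ^ d := by rw [hTp]
    _ ≤ 2 * ε * (3 * D2) ^ d := by
        apply mul_le_mul_of_nonneg_left _ (by positivity)
        exact pow_le_pow_left₀ (tsum_nonneg hG0) hGT d
    _ = L / 4 := by
        rw [hεdef]
        field_simp
        ring

end Main
end

section
/- Let d ≥ 1 and let (T_n) be a sequence of compact convex subsets of ℝ^d, each with positive Lebesgue measure |T_n|, such that the rescaled bodies |T_n|^{−1/d}·T_n converge in the Hausdorff metric to a fixed compact convex set T with nonempty interior. Then there exist a constant c > 0 and N ∈ ℕ such that for all n ≥ N and all h ∈ ℝ^d with ‖h‖₂ ≤ |T_n|^{1/d}: ( |T_n| − |T_n ∩ (T_n − h)| ) / |T_n| ≤ c·‖h‖₂ / |T_n|^{1/d}, where T_n − h := { x − h : x ∈ T_n } and |·| denotes Lebesgue measure. -/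
open MeasureTheory Metric
open scoped Pointwise

lemma erosion {E : Type*} [NormedAddCommGroup E] [InnerProductSpace ℝ E] [CompleteSpace E]
    {S Tl : Set E} (hSc : Convex ℝ S) (hScl : IsClosed S)
    {a : E} {r : ℝ} (hr : 0 < r) (hball : closedBall a (2*r) ⊆ Tl)
    (hdist : ∀ y ∈ Tl, ∃ s ∈ S, dist y s ≤ r) :
    closedBall a r ⊆ S := by
  intro x hx
  by_contra hxS
  obtain ⟨f, u, hfu, hux⟩ := geometric_hahn_banach_closed_point hSc hScl hxS
  set v := (InnerProductSpace.toDual ℝ E).symm f with hv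
  have hfv : ∀ w, f w = inner ℝ v w := by
    intro w
    have h1 : InnerProductSpace.toDual ℝ E v = f :=
      (InnerProductSpace.toDual ℝ E).apply_symm_apply f
    rw [← h1, InnerProductSpace.toDual_apply_apply]
  -- S nonempty
  obtain ⟨s₀, hs₀S, -⟩ := hdist a (hball (by simp [dist_self]; positivity))
  have hvne : v ≠ 0 := by
    rintro h0
    have hfx : f x = 0 := by rw [hfv, h0, inner_zero_left]
    have hfs : f s₀ = 0 := by rw [hfv, h0, inner_zero_left]
    have := hfu s₀ hs₀S
    rw [hfs] at this
    rw [hfx] at hux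
    linarith
  have hvpos : 0 < ‖v‖ := norm_pos_iff.2 hvne
  set y := x + (r / ‖v‖) • v with hy
  have hyTl : y ∈ Tl := by
    apply hball
    have : dist y a ≤ dist y x + dist x a := dist_triangle y x a
    have hdyx : dist y x = r := by
      rw [hy, dist_eq_norm]
      simp only [add_sub_cancel_left, norm_smul, Real.norm_eq_abs,
        abs_of_nonneg (div_nonneg hr.le hvpos.le)]
      field_simp
    have hxa : dist x a ≤ r := mem_closedBall.1 hx
    rw [mem_closedBall]
    linarith
  obtain ⟨s, hsS, hds⟩ := hdist y hyTl
  have hfy : f y = f x + r * ‖v‖ := by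
    rw [hy, map_add, f.map_smul, hfv v, real_inner_self_eq_norm_sq, smul_eq_mul]
    field_simp
  have hbound : |f y - f s| ≤ ‖v‖ * r := by
    have h1 : f y - f s = inner ℝ v (y - s) := by rw [hfv, hfv, inner_sub_right]
    rw [h1]
    calc |(inner ℝ v (y - s) : ℝ)| ≤ ‖v‖ * ‖y - s‖ := abs_real_inner_le_norm v (y - s)
      _ ≤ ‖v‖ * r := by
          apply mul_le_mul_of_nonneg_left _ hvpos.le
          rw [← dist_eq_norm]; exact hds
  have hfsu : f s < u := hfu s hsS
  have : f s ≥ f y - ‖v‖ * r := by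
    have := abs_le.1 hbound
    linarith [this.1, this.2]
  rw [hfy] at this
  linarith

/-- Lemma S.1.2 (geometric overlap lemma): for compact convex bodies `T_n ⊂ ℝ^d` of
positive volume whose rescalings `|T_n|^{-1/d} T_n` converge in the Hausdorff metric to a
fixed compact convex body with nonempty interior, the relative volume deficiency of the
overlap `T_n ∩ (T_n − h)` is `O(‖h‖₂/|T_n|^{1/d})`, uniformly over `‖h‖₂ ≤ |T_n|^{1/d}`. -/
theorem stmt18 (d : ℕ) (hd : 1 ≤ d)
    (T : ℕ → Set (EuclideanSpace ℝ (Fin d))) (Tlim : Set (EuclideanSpace ℝ (Fin d)))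
    (hcomp : ∀ n, IsCompact (T n)) (hconv : ∀ n, Convex ℝ (T n))
    (hpos : ∀ n, 0 < volume (T n))
    (hlimcomp : IsCompact Tlim) (hlimconv : Convex ℝ Tlim)
    (hlimint : (interior Tlim).Nonempty)
    (hHaus : Filter.Tendsto (fun n =>
        Metric.hausdorffDist ((((volume (T n)).toReal) ^ (-(1 : ℝ) / d)) • T n) Tlim)
      Filter.atTop (nhds 0)) :
    ∃ c > (0 : ℝ), ∃ N : ℕ, ∀ n ≥ N, ∀ h : EuclideanSpace ℝ (Fin d),
      ‖h‖ ≤ ((volume (T n)).toReal) ^ ((1 : ℝ) / d) →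
      ((volume (T n)).toReal - (volume (T n ∩ (fun x => x - h) '' T n)).toReal) /
          (volume (T n)).toReal ≤
        c * ‖h‖ / ((volume (T n)).toReal) ^ ((1 : ℝ) / d) := by
  classical
  obtain ⟨a, ha⟩ := hlimint
  obtain ⟨ε, hε, hballε⟩ := Metric.isOpen_iff.1 isOpen_interior a ha
  set r : ℝ := ε / 4 with hrdef
  have hr : 0 < r := by positivity
  have hball2 : closedBall a (2*r) ⊆ Tlim := by
    intro z hz
    rw [mem_closedBall] at hz
    exact interior_subset (hballε (by rw [mem_ball]; rw [hrdef] at hz; linarith))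
  obtain ⟨N, hN⟩ := Filter.eventually_atTop.1 (hHaus.eventually (gt_mem_nhds hr))
  have hd1 : (1:ℝ) ≤ (d:ℝ) := by exact_mod_cast hd
  refine ⟨(d:ℝ)/r, by positivity, N, ?_⟩
  intro n hn h hh
  have hVfin : volume (T n) ≠ ⊤ := (hcomp n).measure_lt_top.ne
  set V : ℝ := (volume (T n)).toReal with hVdef
  have hV : 0 < V := ENNReal.toReal_pos (hpos n).ne' hVfin
  set vh : ℝ := V ^ ((1:ℝ)/d) with hvhdef
  have hvh : 0 < vh := Real.rpow_pos_of_pos hV _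
  set sc : ℝ := V ^ (-(1:ℝ)/d) with hscdef
  have hsc : 0 < sc := Real.rpow_pos_of_pos hV _
  have hsv : vh * sc = 1 := by
    rw [hvhdef, hscdef, ← Real.rpow_add hV]
    norm_num
    rw [show ((d:ℝ))⁻¹ + -1/(d:ℝ) = 0 by ring, Real.rpow_zero]
  have hTne : (T n).Nonempty := by
    rw [Set.nonempty_iff_ne_empty]
    intro he
    have := hpos n
    rw [he] at this
    simpa using this
  set Sn : Set (EuclideanSpace ℝ (Fin d)) := sc • T n with hSndef
  have hSnc : Convex ℝ Sn := (hconv n).smul sc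
  have hSncomp : IsCompact Sn := (hcomp n).smul sc
  have hSnne : Sn.Nonempty := hTne.smul_set
  have hTlne : Tlim.Nonempty := ⟨a, interior_subset ha⟩
  have hne_top := hausdorffEdist_ne_top_of_nonempty_of_bounded hTlne hSnne
    hlimcomp.isBounded hSncomp.isBounded
  have hdlt : hausdorffDist Sn Tlim < r := hN n hn
  have hdist : ∀ y ∈ Tlim, ∃ z ∈ Sn, dist y z ≤ r := by
    intro y hy
    obtain ⟨z, hz, hzd⟩ := hSncomp.exists_infDist_eq_dist hSnne y
    refine ⟨z, hz, ?_⟩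
    rw [← hzd]
    calc infDist y Sn ≤ hausdorffDist Tlim Sn := infDist_le_hausdorffDist_of_mem hy hne_top
      _ = hausdorffDist Sn Tlim := hausdorffDist_comm
      _ ≤ r := hdlt.le
  have hbb : closedBall a r ⊆ Sn := erosion hSnc hSncomp.isClosed hr hball2 hdist
  have hTn_eq : vh • Sn = T n := by
    rw [hSndef, smul_smul, hsv, one_smul]
  have hBallT : closedBall (vh • a) (vh * r) ⊆ T n := by
    rw [← hTn_eq]
    have h1 : vh • closedBall a r ⊆ vh • Sn := Set.smul_set_mono hbb
    rwa [smul_closedBall vh a hr.le, Real.norm_of_nonneg hvh.le] at h1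
  set a' : EuclideanSpace ℝ (Fin d) := vh • a with ha'def
  set ρ : ℝ := vh * r with hρdef
  have hρ : 0 < ρ := mul_pos hvh hr
  have ha'T : a' ∈ T n := hBallT (mem_closedBall_self hρ.le)
  set W : ℝ := (volume (T n ∩ (fun x => x - h) '' T n)).toReal with hWdef
  have hW0 : 0 ≤ W := ENNReal.toReal_nonneg
  by_cases hcase : ‖h‖ ≤ ρ
  · -- main case
    set lam : ℝ := ‖h‖ / ρ with hlamdef
    have hlam0 : 0 ≤ lam := div_nonneg (norm_nonneg h) hρ.le
    have hlam1 : lam ≤ 1 := (div_le_one hρ).2 hcase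
    set g := AffineMap.homothety a' (1 - lam) with hgdef
    have hgx : ∀ x, g x = (1-lam) • x + lam • a' := by
      intro x
      rw [hgdef, AffineMap.homothety_apply]
      simp only [vsub_eq_sub, vadd_eq_add, smul_sub]
      module
    have hgT : ∀ x ∈ T n, g x ∈ T n := by
      intro x hx
      rw [hgx]
      exact hconv n hx ha'T (by linarith) hlam0 (by ring)
    have himg : (⇑g) '' T n ⊆ T n ∩ (fun x => x - h) '' T n := by
      rintro _ ⟨x, hxT, rfl⟩
      refine ⟨hgT x hxT, g x + h, ?_, by simp⟩
      by_cases hh0 : h = 0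
      · simpa [hh0] using hgT x hxT
      · have hnh : 0 < ‖h‖ := norm_pos_iff.2 hh0
        have hlampos : 0 < lam := div_pos hnh hρ
        have hmem : a' + lam⁻¹ • h ∈ closedBall a' ρ := by
          rw [mem_closedBall, dist_eq_norm]
          have : a' + lam⁻¹ • h - a' = lam⁻¹ • h := by abel
          rw [this, norm_smul, Real.norm_eq_abs, abs_of_pos (inv_pos.2 hlampos), hlamdef]
          rw [inv_div, div_mul_cancel₀ _ hnh.ne']
        have key : g x + h = (1-lam) • x + lam • (a' + lam⁻¹ • h) := by
          rw [hgx, smul_add, smul_inv_smul₀ hlampos.ne']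
          abel
        rw [key]
        exact hconv n hxT (hBallT hmem) (by linarith) hlampos.le (by ring)
    have hfrk : Module.finrank ℝ (EuclideanSpace ℝ (Fin d)) = d := finrank_euclideanSpace_fin
    have h2 : volume ((⇑g) '' T n) = ENNReal.ofReal ((1-lam)^d) * volume (T n) := by
      rw [Measure.addHaar_image_homothety, hfrk,
        abs_of_nonneg (pow_nonneg (by linarith) d)]
    have h3 : (1-lam)^d * V ≤ W := by
      have h4 : volume ((⇑g) '' T n) ≤ volume (T n ∩ (fun x => x - h) '' T n) :=
        measure_mono himg
      have h5 : (volume ((⇑g) '' T n)).toReal ≤ W := by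
        apply ENNReal.toReal_mono _ h4
        exact ((measure_mono Set.inter_subset_left).trans_lt (hcomp n).measure_lt_top).ne
      rw [h2, ENNReal.toReal_mul, ENNReal.toReal_ofReal (pow_nonneg (by linarith) d)] at h5
      exact h5
    have bern : 1 - (1-lam)^d ≤ (d:ℝ) * lam := by
      have hb := one_add_mul_le_pow (a := -lam) (by linarith) d
      have hb' : (1:ℝ) + (d:ℝ) * (-lam) ≤ (1 - lam)^d := by
        rw [← sub_eq_add_neg] at hb
        simpa using hb
      linarith
    have lhs_le : (V - W)/V ≤ 1 - (1-lam)^d := by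
      rw [div_le_iff₀ hV]
      have : (1 - (1-lam)^d) * V = V - (1-lam)^d * V := by ring
      linarith
    have rhs_eq : (d:ℝ)/r * ‖h‖ / vh = (d:ℝ) * lam := by
      rw [hlamdef, hρdef]
      field_simp
      try ring
      try tauto
    rw [rhs_eq]
    linarith
  · -- large h case
    push_neg at hcase
    have l1 : (V - W)/V ≤ 1 := by
      rw [div_le_one hV]; linarith
    have e1 : (d:ℝ)/r * ρ = (d:ℝ) * vh := by
      rw [hρdef]; field_simp
    have rhs_ge : 1 ≤ (d:ℝ)/r * ‖h‖ / vh := by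
      rw [le_div_iff₀ hvh, one_mul]
      have h6 : (d:ℝ)/r * ρ ≤ (d:ℝ)/r * ‖h‖ :=
        mul_le_mul_of_nonneg_left hcase.le (by positivity)
      nlinarith [mul_le_mul_of_nonneg_right hd1 hvh.le]
    linarith
end
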